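/- arXiv:1503.01048 — 8 statements merged into one kernel-verified Lean document; each statement's English description precedes it below -/
import Mathlib

section
/- If G is a finite simple graph with edge reconstruction number at least 3 (equivalently, for every multiset S of at most 2 edge-cards of G there is a blocker of S), then G is 2-swappable. -/
open SimpleGraph
open scoped Classical

/-- A finite simple graph `G` is 2-swappable if for every edge `e` of `G` there exist a set
`A` of edges of `G` with `e ∈ A` and `|A| ≤ 2`, and a set `B` of edges of the complement of
`G`, such that deleting the edges in `A` and adding the edges in `B` yields a graph
isomorphic to `G`. -/
def TwoSwappable {V : Type} (G : SimpleGraph V) : Prop :=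
  ∀ e ∈ G.edgeSet, ∃ A B : Set (Sym2 V),
    e ∈ A ∧ A ⊆ G.edgeSet ∧ A.ncard ≤ 2 ∧ B ⊆ Gᶜ.edgeSet ∧
    Nonempty ((G.deleteEdges A ⊔ SimpleGraph.fromEdgeSet B) ≃g G)
/-- The edge-deck of `G`: the multiset of edge-deleted subgraphs `G - e` over all edges
`e` of `G` (each regarded up to isomorphism via `DeckContains` below). -/
noncomputable def edgeDeck {V : Type} [Fintype V] (G : SimpleGraph V) :
    Multiset (SimpleGraph V) :=
  G.edgeFinset.val.map fun e => G.deleteEdges {e}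

/-- `S` is a sub-multiset of the edge-deck of `H`, up to isomorphism of the cards. -/
def DeckContains {V : Type} [Fintype V] (H : SimpleGraph V)
    (S : Multiset (SimpleGraph V)) : Prop :=
  ∃ T ≤ edgeDeck H, Multiset.Rel (fun A B => Nonempty (A ≃g B)) S T

/-- The edge reconstruction number of `G` is at least 3: every multiset of at most two
edge-cards of `G` admits a blocker, i.e. a graph `H` not isomorphic to `G` whose edge-deck
contains the given cards. -/
def ErnGeThree {V : Type} [Fintype V] (G : SimpleGraph V) : Prop :=
  ∀ S : Multiset (SimpleGraph V), S ≤ edgeDeck G → S.card ≤ 2 →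
    ∃ H : SimpleGraph V, ¬ Nonempty (H ≃g G) ∧ DeckContains H S

/-!
Fix an edge `e` and another edge `x` (there is one: otherwise the single card `G - e` already
reconstructs `G`). A blocker `H` of the cards `G - x` and `G - e` satisfies
`G - x + b₁ ≅ H ≅ G - e + b₂` for non-edges `b₁`, `b₂` of `G`, and the composite isomorphism
`σ` gives `σ(G) = G - {e, β} + {b₂, σ x}` with `β = σ b₁ ≠ b₂`. If `σ x ≠ e` this is a 2-swap
at `e`. If `σ x = e`, then `σ(G) = G - β + b₂`; running the argument again with `β` in place
of `x` gives either a 2-swap at `e` or some `σ'` with `σ'(G) = G - β' + b'` and `σ' β = e`,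
and then `σ'(σ(G)) = G - {e, β'} + {b', σ' b₂}` is a 2-swap at `e`.
-/

namespace Equiv

variable {α β : Type*}

@[simps]
def sym2Map (π : α ≃ β) : Sym2 α ≃ Sym2 β where
  toFun := Sym2.map π
  invFun := Sym2.map π.symm
  left_inv z := by simp [Sym2.map_map]
  right_inv z := by simp [Sym2.map_map]

theorem sym2Map_trans {γ : Type*} (π : α ≃ β) (ρ : β ≃ γ) :
    (π.trans ρ).sym2Map = π.sym2Map.trans ρ.sym2Map := by
  ext z
  simp [Sym2.map_map]

theorem Perm.exists_sym2Map_eq {z w : Sym2 α} (hz : ¬z.IsDiag) (hw : ¬w.IsDiag) :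
    ∃ σ : Perm α, σ.sym2Map z = w := by
  induction z using Sym2.inductionOn with | hf a b => ?_
  induction w using Sym2.inductionOn with | hf c d => ?_
  obtain ⟨σ, hσa, hσb⟩ := MulAction.is_two_pretransitive_iff.mp
    (Perm.isMultiplyPretransitive α 2) (mt Sym2.mk_isDiag_iff.mpr hz)
    (mt Sym2.mk_isDiag_iff.mpr hw)
  exact ⟨σ, by simp_all⟩

end Equiv

namespace Multiset

variable {α β : Type*} {r : α → β → Prop}

theorem rel_singleton_left {a : α} {s : Multiset β} :
    Rel r {a} s ↔ ∃ b, s = {b} ∧ r a b := by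
  rw [← cons_zero, rel_cons_left]
  simp [and_comm]

theorem rel_pair_left {a₁ a₂ : α} {s : Multiset β} :
    Rel r {a₁, a₂} s ↔ ∃ b₁ b₂, s = {b₁, b₂} ∧ r a₁ b₁ ∧ r a₂ b₂ := by
  rw [insert_eq_cons, rel_cons_left]
  simp only [rel_singleton_left]
  constructor
  · rintro ⟨b₁, _, h₁, ⟨b₂, rfl, h₂⟩, rfl⟩
    exact ⟨b₁, b₂, rfl, h₁, h₂⟩
  · rintro ⟨b₁, b₂, rfl, h₁, h₂⟩
    exact ⟨b₁, {b₂}, h₁, ⟨b₂, rfl, h₂⟩, rfl⟩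

end Multiset

namespace Set

variable {α β : Type*}

theorem image_eq_insert_of_image_insert_sdiff {σ : α → β} (hσ : Function.Injective σ) {E : Set α}
    {T : Set β} {x b : α} (hx : x ∈ E) (hb : b ∉ E) (h : σ '' insert b (E \ {x}) = T) :
    σ '' E = insert (σ x) (T \ {σ b}) := by
  have hE : E = insert x (insert b (E \ {x}) \ {b}) := by
    rw [insert_sdiff_self_of_notMem (fun h ↦ hb h.1), insert_sdiff_singleton,
      insert_eq_of_mem hx]
  rw [← h, ← image_singleton, ← image_sdiff hσ, ← image_insert_eq, ← hE]

theorem symm_apply_notMem_and_image_insert_eq {σ : α ≃ β} {E : Set α} {F : Set β} {e : α}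
    {f : β}
    (he : e ∈ E) (hf : f ∈ F) (hne : σ '' E ≠ F) (h : σ '' (E \ {e}) = F \ {f}) :
    σ.symm f ∉ E ∧ σ '' insert (σ.symm f) (E \ {e}) = F := by
  have himage : σ '' insert (σ.symm f) (E \ {e}) = F := by
    rw [image_insert_eq, h, Equiv.apply_symm_apply, insert_sdiff_singleton, insert_eq_of_mem hf]
  refine ⟨fun hfE ↦ ?_, himage⟩
  obtain rfl | hfe := eq_or_ne (σ.symm f) e
  · exact hne (by rwa [insert_sdiff_singleton, insert_eq_of_mem he] at himage)
  · have : f ∈ σ '' (E \ {e}) := ⟨σ.symm f, ⟨hfE, hfe⟩, σ.apply_symm_apply f⟩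
    rw [h] at this
    exact this.2 rfl

end Set

namespace SimpleGraph

variable {V W : Type*} {G : SimpleGraph V} {H : SimpleGraph W}

theorem Iso.image_edgeSet (φ : G ≃g H) : φ.toEquiv.sym2Map '' G.edgeSet = H.edgeSet := by
  ext z
  rw [Set.mem_image_equiv]
  exact φ.symm.map_mem_edgeSet_iff

theorem edgeSet_map_equiv (π : V ≃ W) (G : SimpleGraph V) :
    (G.map π).edgeSet = π.sym2Map '' G.edgeSet :=
  edgeSet_map π.toEmbedding G

theorem nonempty_iso_of_image_edgeSet (π : V ≃ W) (h : π.sym2Map '' G.edgeSet = H.edgeSet) :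
    Nonempty (G ≃g H) := by
  obtain rfl : G.map π = H := edgeSet_injective (by rw [edgeSet_map_equiv, h])
  exact ⟨Iso.map π G⟩

variable (G) in
theorem deleteEdges_singleton_injOn : Set.InjOn (fun e ↦ G.deleteEdges {e}) G.edgeSet := by
  intro e _ e' he' hee'
  by_contra hne
  have : e' ∈ (G.deleteEdges {e}).edgeSet := by
    simpa [edgeSet_deleteEdges, he'] using Ne.symm hne
  simp [hee', edgeSet_deleteEdges] at this

theorem notMem_and_image_insert_eq_of_iso_deleteEdges {e : Sym2 V} {f : Sym2 W}
    (φ : G.deleteEdges {e} ≃g H.deleteEdges {f}) (he : e ∈ G.edgeSet) (hf : f ∈ H.edgeSet)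
    (hHG : ¬Nonempty (H ≃g G)) :
    φ.toEquiv.sym2Map.symm f ∉ G.edgeSet ∧
      φ.toEquiv.sym2Map '' insert (φ.toEquiv.sym2Map.symm f) (G.edgeSet \ {e}) = H.edgeSet :=
  Set.symm_apply_notMem_and_image_insert_eq he hf
    (fun h ↦ hHG ((nonempty_iso_of_image_edgeSet _ h).map Iso.symm))
    (by simpa only [edgeSet_deleteEdges] using φ.image_edgeSet)

end SimpleGraph

open SimpleGraph

/-- `TwoSwappable G` is definitionally `∀ e ∈ G.edgeSet, TwoSwappableAt G e`. -/
def TwoSwappableAt {V : Type} (G : SimpleGraph V) (e : Sym2 V) : Prop :=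
  ∃ A B : Set (Sym2 V), e ∈ A ∧ A ⊆ G.edgeSet ∧ A.ncard ≤ 2 ∧ B ⊆ Gᶜ.edgeSet ∧
    Nonempty ((G.deleteEdges A ⊔ SimpleGraph.fromEdgeSet B) ≃g G)

section TwoSwappableAt

variable {V : Type} {G : SimpleGraph V} {e : Sym2 V}

theorem deleteEdges_sdiff_sup_fromEdgeSet_sdiff (G K : SimpleGraph V) :
    G.deleteEdges (G.edgeSet \ K.edgeSet) ⊔ fromEdgeSet (K.edgeSet \ G.edgeSet) = K := by
  refine edgeSet_injective ?_
  ext z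
  have := K.not_isDiag_of_mem_edgeSet (e := z)
  simp only [edgeSet_sup, edgeSet_deleteEdges, edgeSet_fromEdgeSet, Set.mem_union,
    Set.mem_sdiff, Sym2.mem_diagSet]
  tauto

theorem twoSwappableAt_of_iso {K : SimpleGraph V} (φ : K ≃g G) (he : e ∈ G.edgeSet)
    (heK : e ∉ K.edgeSet) (hcard : (G.edgeSet \ K.edgeSet).ncard ≤ 2) : TwoSwappableAt G e := by
  refine ⟨G.edgeSet \ K.edgeSet, K.edgeSet \ G.edgeSet, ⟨he, heK⟩, Set.sdiff_subset, hcard,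
    fun z hz ↦ ?_, ?_⟩
  · induction z using Sym2.inductionOn with | hf u v => ?_
    exact (compl_adj G u v).mpr ⟨(hz.1 : K.Adj u v).ne, hz.2⟩
  · rw [deleteEdges_sdiff_sup_fromEdgeSet_sdiff]
    exact ⟨φ⟩

theorem twoSwappableAt_of_image_eq (σ : Equiv.Perm V) {b c β : Sym2 V} (he : e ∈ G.edgeSet)
    (hc : c ≠ e) (h : σ.sym2Map '' G.edgeSet = insert c (insert b (G.edgeSet \ {β}) \ {e})) :
    TwoSwappableAt G e := by
  refine twoSwappableAt_of_iso (Iso.map σ G).symm he ?_ ?_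
  · rw [edgeSet_map_equiv, h]
    rintro (rfl | ⟨-, hne⟩)
    exacts [hc rfl, hne rfl]
  · have hsub : G.edgeSet \ (G.map σ).edgeSet ⊆ {e, β} := by
      rw [edgeSet_map_equiv, h]
      intro z hz
      simp only [Set.mem_sdiff, Set.mem_insert_iff, Set.mem_singleton_iff] at hz ⊢
      tauto
    calc _ ≤ ({e, β} : Set (Sym2 V)).ncard := Set.ncard_le_ncard hsub
      _ ≤ ({β} : Set (Sym2 V)).ncard + 1 := Set.ncard_insert_le _ _
      _ = 2 := by rw [Set.ncard_singleton]

theorem twoSwappableAt_of_image_eq_insert_of_image_eq_insert {σ₁ σ₂ : Equiv.Perm V}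
    {b β b' β' : Sym2 V} (he : e ∈ G.edgeSet) (hb : b ∉ G.edgeSet)
    (hβ : β ∈ G.edgeSet) (h₁ : σ₁.sym2Map '' G.edgeSet = insert b (G.edgeSet \ {β}))
    (hσ₂β : σ₂.sym2Map β = e) (h₂ : σ₂.sym2Map '' G.edgeSet = insert b' (G.edgeSet \ {β'})) :
    TwoSwappableAt G e := by
  have hc : σ₂.sym2Map b ≠ e := hσ₂β ▸ σ₂.sym2Map.injective.ne fun hbβ ↦ hb (hbβ ▸ hβ)
  refine twoSwappableAt_of_image_eq (σ₁.trans σ₂) (b := b') (β := β') he hc ?_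
  rw [Equiv.sym2Map_trans, Equiv.coe_trans, Set.image_comp, h₁, Set.image_insert_eq,
    Set.image_sdiff σ₂.sym2Map.injective, Set.image_singleton, hσ₂β, h₂]

end TwoSwappableAt

section Deck

variable {V : Type} [Fintype V]

theorem edgeDeck_nodup (H : SimpleGraph V) : (edgeDeck H).Nodup :=
  H.edgeFinset.nodup.map_on fun _ hf _ hf' ↦
    H.deleteEdges_singleton_injOn (mem_edgeFinset.mp hf) (mem_edgeFinset.mp hf')

theorem mem_edgeDeck {H C : SimpleGraph V} :
    C ∈ edgeDeck H ↔ ∃ f ∈ H.edgeSet, H.deleteEdges {f} = C := by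
  simp [edgeDeck]

theorem pair_le_edgeDeck {G : SimpleGraph V} {x y : Sym2 V} (hx : x ∈ G.edgeSet)
    (hy : y ∈ G.edgeSet) (hxy : x ≠ y) :
    {G.deleteEdges {x}, G.deleteEdges {y}} ≤ edgeDeck G := by
  have hne : G.deleteEdges {x} ≠ G.deleteEdges {y} :=
    G.deleteEdges_singleton_injOn.ne hx hy hxy
  rw [Multiset.le_iff_subset (by simpa using hne)]
  simpa [Multiset.insert_eq_cons, Multiset.cons_subset, mem_edgeDeck] using
    ⟨⟨x, hx, rfl⟩, ⟨y, hy, rfl⟩⟩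

theorem DeckContains.exists_of_singleton {H C : SimpleGraph V} (h : DeckContains H {C}) :
    ∃ f ∈ H.edgeSet, Nonempty (C ≃g H.deleteEdges {f}) := by
  obtain ⟨T, hT, hrel⟩ := h
  obtain ⟨D, rfl, hCD⟩ := Multiset.rel_singleton_left.mp hrel
  obtain ⟨f, hf, rfl⟩ := mem_edgeDeck.mp (Multiset.singleton_le.mp hT)
  exact ⟨f, hf, hCD⟩

theorem DeckContains.exists_of_pair {H C₁ C₂ : SimpleGraph V} (h : DeckContains H {C₁, C₂}) :
    ∃ f₁ ∈ H.edgeSet, ∃ f₂ ∈ H.edgeSet, f₁ ≠ f₂ ∧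
      Nonempty (C₁ ≃g H.deleteEdges {f₁}) ∧ Nonempty (C₂ ≃g H.deleteEdges {f₂}) := by
  obtain ⟨T, hT, hrel⟩ := h
  obtain ⟨D₁, D₂, rfl, hCD₁, hCD₂⟩ := Multiset.rel_pair_left.mp hrel
  have hnodup := Multiset.nodup_of_le hT (edgeDeck_nodup H)
  obtain ⟨hD₁, hD₂⟩ : D₁ ∈ edgeDeck H ∧ D₂ ∈ edgeDeck H := by
    simpa [Multiset.insert_eq_cons, Multiset.cons_subset] using Multiset.subset_of_le hT
  obtain ⟨f₁, hf₁, rfl⟩ := mem_edgeDeck.mp hD₁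
  obtain ⟨f₂, hf₂, rfl⟩ := mem_edgeDeck.mp hD₂
  refine ⟨f₁, hf₁, f₂, hf₂, ?_, hCD₁, hCD₂⟩
  rintro rfl
  simp at hnodup

end Deck

section ErnGeThree

variable {V : Type} [Fintype V] {G : SimpleGraph V} {e x : Sym2 V}

theorem ErnGeThree.exists_ne_of_mem (h : ErnGeThree G) (he : e ∈ G.edgeSet) :
    ∃ x ∈ G.edgeSet, x ≠ e := by
  by_contra! hE
  have hGe : G.edgeSet = {e} := Set.eq_singleton_iff_unique_mem.mpr ⟨he, hE⟩
  obtain ⟨H, hHG, hdeck⟩ := h {G.deleteEdges {e}}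
    (Multiset.singleton_le.mpr (mem_edgeDeck.mpr ⟨e, he, rfl⟩)) (by simp)
  obtain ⟨f, hf, ⟨φ⟩⟩ := hdeck.exists_of_singleton
  have hHf : H.edgeSet = {f} := by
    rw [← (notMem_and_image_insert_eq_of_iso_deleteEdges φ he hf hHG).2, hGe, Set.sdiff_self,
      insert_empty_eq, Set.image_singleton, Equiv.apply_symm_apply]
  obtain ⟨ρ, hρ⟩ := Equiv.Perm.exists_sym2Map_eq (G.not_isDiag_of_mem_edgeSet he)
    (H.not_isDiag_of_mem_edgeSet hf)
  exact hHG ((nonempty_iso_of_image_edgeSet ρ (by rw [hGe, Set.image_singleton, hρ, hHf])).map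
    Iso.symm)

theorem ErnGeThree.exists_perm_image_eq (h : ErnGeThree G) (he : e ∈ G.edgeSet)
    (hx : x ∈ G.edgeSet) (hxe : x ≠ e) :
    ∃ (σ : Equiv.Perm V) (b β : Sym2 V), b ∉ G.edgeSet ∧ β ∈ G.edgeSet ∧ β ≠ e ∧
      σ.sym2Map '' G.edgeSet = insert (σ.sym2Map x) (insert b (G.edgeSet \ {β}) \ {e}) := by
  obtain ⟨H, hHG, hdeck⟩ := h _ (pair_le_edgeDeck hx he hxe) (by simp)
  obtain ⟨f₁, hf₁, f₂, hf₂, hf, ⟨φ₁⟩, ⟨φ₂⟩⟩ := hdeck.exists_of_pair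
  obtain ⟨hb₁, h₁⟩ := notMem_and_image_insert_eq_of_iso_deleteEdges φ₁ hx hf₁ hHG
  obtain ⟨hb₂, h₂⟩ := notMem_and_image_insert_eq_of_iso_deleteEdges φ₂ he hf₂ hHG
  set π₁ := φ₁.toEquiv.sym2Map
  set π₂ := φ₂.toEquiv.sym2Map
  set σ : Equiv.Perm V := φ₁.toEquiv.trans φ₂.toEquiv.symm
  have hσ : σ.sym2Map = π₁.trans π₂.symm := Equiv.sym2Map_trans _ _
  have hσb₁ : σ.sym2Map (π₁.symm f₁) = π₂.symm f₁ := by simp [hσ]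
  have hσimage : σ.sym2Map '' insert (π₁.symm f₁) (G.edgeSet \ {x}) =
      insert (π₂.symm f₂) (G.edgeSet \ {e}) := by
    rw [hσ, Equiv.coe_trans, Set.image_comp, h₁, ← h₂, Equiv.symm_image_image]
  have hβ : π₂.symm f₁ ∈ insert (π₂.symm f₂) (G.edgeSet \ {e}) := by
    rw [← hσimage, ← hσb₁]
    exact Set.mem_image_of_mem _ (Set.mem_insert _ _)
  have hβb : π₂.symm f₁ ≠ π₂.symm f₂ := π₂.symm.injective.ne hf
  obtain ⟨hβE, hβe⟩ := hβ.resolve_left hβb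
  refine ⟨σ, π₂.symm f₂, π₂.symm f₁, hb₂, hβE, hβe, ?_⟩
  rw [Set.image_eq_insert_of_image_insert_sdiff σ.sym2Map.injective hx hb₁ hσimage, hσb₁]
  have hb₂e : π₂.symm f₂ ≠ e := fun h ↦ hb₂ (h ▸ he)
  congr 1
  ext z
  simp only [Set.mem_sdiff, Set.mem_insert_iff, Set.mem_singleton_iff]
  grind

theorem ErnGeThree.twoSwappableAt_or_exists_perm (h : ErnGeThree G) (he : e ∈ G.edgeSet)
    (hx : x ∈ G.edgeSet) (hxe : x ≠ e) :
    TwoSwappableAt G e ∨ ∃ (σ : Equiv.Perm V) (b β : Sym2 V), b ∉ G.edgeSet ∧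
      β ∈ G.edgeSet ∧ β ≠ e ∧ σ.sym2Map x = e ∧
      σ.sym2Map '' G.edgeSet = insert b (G.edgeSet \ {β}) := by
  obtain ⟨σ, b, β, hb, hβ, hβe, hσ⟩ := h.exists_perm_image_eq he hx hxe
  by_cases hσx : σ.sym2Map x = e
  · refine Or.inr ⟨σ, b, β, hb, hβ, hβe, hσx, ?_⟩
    rw [hσ, hσx, Set.insert_sdiff_singleton, Set.insert_eq_of_mem (.inr ⟨he, hβe.symm⟩)]
  · exact Or.inl (twoSwappableAt_of_image_eq σ he hσx hσ)

end ErnGeThree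

theorem stmt_0_general {V : Type} [Fintype V] (G : SimpleGraph V)
    (h : ErnGeThree G) : TwoSwappable G := by
  intro e he
  obtain ⟨x, hx, hxe⟩ := h.exists_ne_of_mem he
  obtain hswap | ⟨σ₁, b, β, hb, hβ, hβe, -, h₁⟩ := h.twoSwappableAt_or_exists_perm he hx hxe
  · exact hswap
  obtain hswap | ⟨σ₂, b', β', -, -, -, hσ₂β, h₂⟩ := h.twoSwappableAt_or_exists_perm he hβ hβe
  · exact hswap
  exact twoSwappableAt_of_image_eq_insert_of_image_eq_insert he hb hβ h₁ hσ₂β h₂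

/-- If `G` is a finite simple graph with edge reconstruction number at least 3, then `G`
is 2-swappable. -/
theorem stmt_0 {V : Type} [Fintype V] [DecidableEq V] (G : SimpleGraph V)
    (h : ErnGeThree G) : TwoSwappable G :=
  stmt_0_general G h
end

section
/- Let n ≥ 4 be an even integer and let M be a perfect matching of the complete graph K_n. Then the graph G = K_n − M (the complete graph with the edges of M removed) is 2-swappable. -/
open SimpleGraph
open scoped Classical

set_option maxRecDepth 8000
set_option maxHeartbeats 2000000

/-- If `n ≥ 4` is even and `M` is a perfect matching of the complete graph `K_n`,
then `K_n - M` is 2-swappable. -/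
theorem stmt_2 (n : ℕ) (hn : 4 ≤ n) (hev : Even n)
    (M : (⊤ : SimpleGraph (Fin n)).Subgraph) (hM : M.IsPerfectMatching) :
    TwoSwappable ((⊤ : SimpleGraph (Fin n)) \ M.spanningCoe) := by
  classical
  rw [Subgraph.isPerfectMatching_iff] at hM
  choose f hf hfuniq using hM
  have hadj : ∀ a b : Fin n, M.Adj a b ↔ f a = b := by
    intro a b
    exact ⟨fun h => (hfuniq a b h).symm, fun h => h ▸ hf a⟩
  have hinv : ∀ x, f (f x) = x := fun x => (hfuniq (f x) x (hf x).symm).symm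
  have hnefix : ∀ x, f x ≠ x := fun x h => (hf x).ne h.symm
  intro e he
  induction e using Sym2.ind with
  | _ u v =>
  rw [mem_edgeSet, sdiff_adj, top_adj, Subgraph.spanningCoe_adj, hadj] at he
  obtain ⟨huv, hMuv⟩ := he
  obtain ⟨u', hfu⟩ : ∃ x, f u = x := ⟨f u, rfl⟩
  obtain ⟨v', hfv⟩ : ∃ x, f v = x := ⟨f v, rfl⟩
  rw [hfu] at hMuv
  have hfu' : f u' = u := by rw [← hfu, hinv]
  have hfv' : f v' = v := by rw [← hfv, hinv]
  have hxu : ∀ x, f x = u ↔ x = u' := by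
    intro x
    constructor
    · rintro rfl; rw [← hfu]; exact (hinv x).symm
    · rintro rfl; exact hfu'
  have hxv : ∀ x, f x = v ↔ x = v' := by
    intro x
    constructor
    · rintro rfl; rw [← hfv]; exact (hinv x).symm
    · rintro rfl; exact hfv'
  have hxu' : ∀ x, f x = u' ↔ x = u := by
    intro x
    constructor
    · intro h; have := congrArg f h; rwa [hinv, hfu'] at this
    · rintro rfl; exact hfu
  have hxv' : ∀ x, f x = v' ↔ x = v := by
    intro x
    constructor
    · intro h; have := congrArg f h; rwa [hinv, hfv'] at this
    · rintro rfl; exact hfv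
  have hu'u : u' ≠ u := by rw [← hfu]; exact hnefix u
  have hv'v : v' ≠ v := by rw [← hfv]; exact hnefix v
  have hu'v : u' ≠ v := hMuv
  have hv'u : v' ≠ u := by
    intro h
    rw [← hfv, hxu] at h
    exact hu'v h.symm
  have hu'v' : u' ≠ v' := by
    intro h
    rw [← hfu, hxv'] at h
    exact huv h
  refine ⟨{s(u, v), s(u', v')}, {s(u, u'), s(v, v')}, ?_, ?_, ?_, ?_, ?_⟩
  · exact Set.mem_insert _ _
  · rintro x (rfl | rfl)
    · rw [mem_edgeSet, sdiff_adj, top_adj, Subgraph.spanningCoe_adj, hadj]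
      refine ⟨huv, ?_⟩; rw [hfu]; exact hMuv
    · rw [mem_edgeSet, sdiff_adj, top_adj, Subgraph.spanningCoe_adj, hadj, hfu']
      exact ⟨hu'v', fun h => hv'u h.symm⟩
  · exact le_trans (Set.ncard_insert_le _ _) (by simp)
  · rintro x (rfl | rfl)
    · rw [mem_edgeSet, compl_adj, sdiff_adj, top_adj, Subgraph.spanningCoe_adj, hadj]
      exact ⟨fun h => hu'u h.symm, fun h => h.2 hfu⟩
    · rw [mem_edgeSet, compl_adj, sdiff_adj, top_adj, Subgraph.spanningCoe_adj, hadj]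
      exact ⟨fun h => hv'v h.symm, fun h => h.2 hfv⟩
  · refine ⟨{ toEquiv := Equiv.swap u' v, map_rel_iff' := ?_ }⟩
    intro a b
    simp only [Equiv.coe_fn_mk, sup_adj, deleteEdges_adj, fromEdgeSet_adj, sdiff_adj,
      top_adj, Subgraph.spanningCoe_adj, hadj, Set.mem_insert_iff, Set.mem_singleton_iff,
      Sym2.eq_iff, ne_eq, Equiv.swap_apply_def]
    by_cases hau : a = u <;> by_cases hav : a = v <;> by_cases hau' : a = u' <;>
      by_cases hav' : a = v' <;> by_cases hbu : b = u <;> by_cases hbv : b = v <;>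
      by_cases hbu' : b = u' <;> by_cases hbv' : b = v' <;>
      simp_all [hxu, hxv, hxu', hxv', hfu, hfv, hfu', hfv'] <;>
      simp_all [ne_comm, (hxu u').mpr rfl, (hxv v').mpr rfl, (hxu' u).mpr rfl, (hxv' v).mpr rfl]
end

section
/- Let n ≥ 5 and let H be a Hamiltonian cycle of the complete graph K_n. Then the graph G = K_n − H (the complete graph with the edges of H removed, i.e. the complement of the cycle C_n) is 2-swappable. -/
/-!
Labelling the vertices in the order of the Hamiltonian cycle identifies `K_n − H` with the
complement of `cycleGraph n`, and 2-swappability is invariant under isomorphism. Swapping `A`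
against `B` in a complement is the same as swapping `B` against `A` in the graph itself. So for a
non-edge `{u, v}` of the cycle it suffices to delete the cycle edges `{u, u+1}, {v, v+1}` and add
`{u, v}, {u+1, v+1}` (a 2-opt move): the result is the Hamiltonian cycle obtained by reversing the
segment `u+1, …, v`, hence isomorphic to the cycle.
-/

open SimpleGraph
open scoped Classical

theorem Fin.val_one_of_one_lt {n : ℕ} [NeZero n] (hn : 1 < n) : (1 : Fin n).val = 1 := by
  rw [Fin.val_one', Nat.mod_eq_of_lt hn]

theorem Fin.val_sub_eq_ite {n : ℕ} (a b : Fin n) :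
    (a - b).val = if b.val ≤ a.val then a.val - b.val else n + a.val - b.val := by
  split_ifs with h
  · exact Fin.coe_sub_iff_le.mpr h
  · exact Fin.coe_sub_iff_lt.mpr (not_le.mp h)

theorem Fin.val_add_one_sub_of_mem_Ioc {n : ℕ} [NeZero n] {w k : Fin n} (hwn : w.val + 1 < n)
    (hk : k ∈ Set.Ioc 0 w) : (w + 1 - k).val = w.val + 1 - k.val := by
  rw [Set.mem_Ioc, Fin.lt_def, Fin.le_def] at hk
  rw [Fin.val_sub_eq_ite, Fin.val_add_one_of_lt' hwn]
  split_ifs <;> omega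

theorem Fin.add_one_sub_mem_Ioc {n : ℕ} [NeZero n] {w k : Fin n} (hwn : w.val + 1 < n)
    (hk : k ∈ Set.Ioc 0 w) : w + 1 - k ∈ Set.Ioc 0 w := by
  have := Fin.val_add_one_sub_of_mem_Ioc hwn hk
  simp only [Set.mem_Ioc, Fin.lt_def, Fin.le_def, Fin.val_zero] at hk ⊢
  omega

namespace SimpleGraph

variable {V W : Type}

def Iso.compl {G : SimpleGraph V} {G' : SimpleGraph W} (φ : G ≃g G') : Gᶜ ≃g G'ᶜ where
  toEquiv := φ.toEquiv
  map_rel_iff' := by simp [φ.injective.ne_iff, φ.map_adj_iff]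

theorem compl_deleteEdges_sup_fromEdgeSet {G : SimpleGraph V} {A B : Set (Sym2 V)}
    (hA : A ⊆ G.edgeSet) (hB : B ⊆ Gᶜ.edgeSet) :
    (G.deleteEdges A ⊔ fromEdgeSet B)ᶜ = Gᶜ.deleteEdges B ⊔ fromEdgeSet A := by
  ext x y
  have hA' : s(x, y) ∈ A → G.Adj x y := fun h => hA h
  have hB' : s(x, y) ∈ B → ¬G.Adj x y := fun h => (hB h : Gᶜ.Adj x y).2
  simp only [compl_adj, sup_adj, deleteEdges_adj, fromEdgeSet_adj]
  tauto

end SimpleGraph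

theorem TwoSwappable.of_iso {V W : Type} {G : SimpleGraph V} {G' : SimpleGraph W}
    (φ : G ≃g G') (hG : TwoSwappable G) : TwoSwappable G' := by
  have image_eq (S : Set (Sym2 V)) : Sym2.map φ '' S = Sym2.map φ.symm ⁻¹' S :=
    congrFun (Set.image_eq_preimage_of_inverse (fun e => by simp [Sym2.map_map])
      (fun e => by simp [Sym2.map_map])) S
  intro e he
  obtain ⟨A, B, heA, hA, hA2, hB, ⟨ψ⟩⟩ :=
    hG (e.map φ.symm) (φ.symm.toHom.map_mem_edgeSet he)
  refine ⟨Sym2.map φ '' A, Sym2.map φ '' B, by rwa [image_eq], ?_, ?_, ?_, ⟨?_⟩⟩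
  · rintro _ ⟨f, hf, rfl⟩
    exact φ.toHom.map_mem_edgeSet (hA hf)
  · rwa [Set.ncard_image_of_injective _ (Sym2.map.injective φ.injective)]
  · rintro _ ⟨f, hf, rfl⟩
    exact φ.compl.toHom.map_mem_edgeSet (hB hf)
  · refine RelIso.trans ?_ (ψ.trans φ)
    exact
      { toEquiv := φ.symm.toEquiv
        map_rel_iff' := by simp [image_eq, φ.symm.injective.ne_iff, φ.symm.map_adj_iff] }

namespace SimpleGraph

variable {n : ℕ}

theorem cycleGraph_adj_iff_val (hn : 1 < n) {u v : Fin n} :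
    (cycleGraph n).Adj u v ↔ u.val + 1 = v.val ∨ v.val + 1 = u.val ∨
      (u.val = 0 ∧ v.val + 1 = n) ∨ (v.val = 0 ∧ u.val + 1 = n) := by
  rw [cycleGraph_adj', Fin.val_sub_eq_ite, Fin.val_sub_eq_ite]
  split_ifs <;> omega

section twoOpt

variable [NeZero n]

theorem cycleGraph_adj_iff_eq_add_one (hn : 1 < n) {u v : Fin n} :
    (cycleGraph n).Adj u v ↔ u = v + 1 ∨ v = u + 1 := by
  rw [cycleGraph_adj', ← Fin.val_one_of_one_lt hn, ← Fin.ext_iff, ← Fin.ext_iff,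
    sub_eq_iff_eq_add', sub_eq_iff_eq_add']

theorem cycleGraph_adj_sub_sub {c u v : Fin n} :
    (cycleGraph n).Adj (c - u) (c - v) ↔ (cycleGraph n).Adj u v := by
  rw [cycleGraph_adj', cycleGraph_adj', sub_sub_sub_cancel_left, sub_sub_sub_cancel_left, or_comm]

/-- The 2-opt move at the non-edge `{u, v}` of the cycle `0, 1, …, n - 1`; it produces the cycle
`u, v, v - 1, …, u + 1, v + 1, …`. -/
def twoOpt (u v : Fin n) : SimpleGraph (Fin n) :=
  (cycleGraph n).deleteEdges {s(u, u + 1), s(v, v + 1)} ⊔ fromEdgeSet {s(u, v), s(u + 1, v + 1)}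

theorem twoOpt_adj_sub_sub (u v x y : Fin n) :
    (twoOpt 0 (v - u)).Adj (x - u) (y - u) ↔ (twoOpt u v).Adj x y := by
  have h0 : (0 : Fin n) = u - u := (sub_self u).symm
  have h1 : (0 : Fin n) + 1 = u + 1 - u := by rw [add_sub_cancel_left, zero_add]
  have h2 : v - u + 1 = v + 1 - u := sub_add_eq_add_sub v u 1
  simp only [twoOpt, sup_adj, deleteEdges_adj, fromEdgeSet_adj, Set.mem_insert_iff,
    Set.mem_singleton_iff, Sym2.eq_iff, cycleGraph_adj', sub_sub_sub_cancel_right, h2]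
  rw [h1, h0]
  simp only [sub_left_inj, ne_eq]

def twoOptIsoSub (u v : Fin n) : twoOpt u v ≃g twoOpt 0 (v - u) where
  toEquiv := Equiv.subRight u
  map_rel_iff' := twoOpt_adj_sub_sub u v _ _

section reverseSegment

variable {w : Fin n}

theorem cycleGraph_adj_iff_of_mem_Ioc_of_notMem (hwn : w.val + 1 < n) {a b : Fin n}
    (ha : a ∈ Set.Ioc 0 w) (hb : b ∉ Set.Ioc 0 w) :
    (cycleGraph n).Adj a b ↔ (a = 1 ∧ b = 0) ∨ (a = w ∧ b = w + 1) := by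
  simp only [Set.mem_Ioc, Fin.lt_def, Fin.le_def, Fin.val_zero] at ha hb
  simp only [cycleGraph_adj_iff_val (by omega : 1 < n), Fin.ext_iff, Fin.val_zero,
    Fin.val_one_of_one_lt (n := n) (by omega), Fin.val_add_one_of_lt' hwn]
  omega

theorem twoOpt_zero_adj_iff_of_mem_Ioc_of_notMem (hwn : w.val + 1 < n) {a b : Fin n}
    (ha : a ∈ Set.Ioc 0 w) (hb : b ∉ Set.Ioc 0 w) :
    (twoOpt 0 w).Adj a b ↔ (a = w ∧ b = 0) ∨ (a = 1 ∧ b = w + 1) := by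
  simp only [twoOpt, sup_adj, deleteEdges_adj, fromEdgeSet_adj, Set.mem_insert_iff,
    Set.mem_singleton_iff, cycleGraph_adj_iff_of_mem_Ioc_of_notMem hwn ha hb, Sym2.eq_iff, zero_add]
  simp only [Set.mem_Ioc, Fin.lt_def, Fin.le_def, Fin.val_zero] at ha hb
  simp only [ne_eq, Fin.ext_iff, Fin.val_zero, Fin.val_one_of_one_lt (n := n) (by omega),
    Fin.val_add_one_of_lt' hwn]
  omega

theorem twoOpt_zero_adj_iff_of_mem_Ioc_iff (hw : w ≠ 0) (hwn : w.val + 1 < n) {a b : Fin n}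
    (hab : a ∈ Set.Ioc 0 w ↔ b ∈ Set.Ioc 0 w) :
    (twoOpt 0 w).Adj a b ↔ (cycleGraph n).Adj a b := by
  simp only [twoOpt, sup_adj, deleteEdges_adj, fromEdgeSet_adj, Set.mem_insert_iff,
    Set.mem_singleton_iff, Sym2.eq_iff, zero_add]
  rw [← Fin.val_ne_iff, Fin.val_zero] at hw
  simp only [Set.mem_Ioc, Fin.lt_def, Fin.le_def, Fin.val_zero] at hab
  simp only [ne_eq, Fin.ext_iff, Fin.val_zero, Fin.val_one_of_one_lt (n := n) (by omega),
    Fin.val_add_one_of_lt' hwn]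
  constructor
  · rintro (⟨h, -⟩ | ⟨h, -⟩)
    · exact h
    · omega
  · intro h
    exact Or.inl ⟨h, by omega⟩

def reverseSegment (w k : Fin n) : Fin n := if k ∈ Set.Ioc 0 w then w + 1 - k else k

theorem reverseSegment_of_mem {k : Fin n} (hk : k ∈ Set.Ioc 0 w) :
    reverseSegment w k = w + 1 - k := if_pos hk

theorem reverseSegment_of_notMem {k : Fin n} (hk : k ∉ Set.Ioc 0 w) :
    reverseSegment w k = k := if_neg hk

theorem reverseSegment_involutive (hwn : w.val + 1 < n) :
    Function.Involutive (reverseSegment w) := by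
  intro k
  by_cases hk : k ∈ Set.Ioc 0 w
  · rw [reverseSegment_of_mem hk, reverseSegment_of_mem (Fin.add_one_sub_mem_Ioc hwn hk),
      sub_sub_cancel]
  · rw [reverseSegment_of_notMem hk, reverseSegment_of_notMem hk]

theorem cycleGraph_adj_reverseSegment (hw : w ≠ 0) (hwn : w.val + 1 < n) (x y : Fin n) :
    (cycleGraph n).Adj (reverseSegment w x) (reverseSegment w y) ↔ (twoOpt 0 w).Adj x y := by
  have crossing {a b : Fin n} (ha : a ∈ Set.Ioc 0 w) (hb : b ∉ Set.Ioc 0 w) :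
      (cycleGraph n).Adj (reverseSegment w a) (reverseSegment w b) ↔ (twoOpt 0 w).Adj a b := by
    have h1 : w + 1 - a = 1 ↔ a = w := by rw [sub_eq_iff_eq_add', add_left_inj, eq_comm]
    have h2 : w + 1 - a = w ↔ a = 1 := by
      rw [sub_eq_iff_eq_add', add_comm a, add_right_inj, eq_comm]
    rw [reverseSegment_of_mem ha, reverseSegment_of_notMem hb,
      cycleGraph_adj_iff_of_mem_Ioc_of_notMem hwn (Fin.add_one_sub_mem_Ioc hwn ha) hb,
      twoOpt_zero_adj_iff_of_mem_Ioc_of_notMem hwn ha hb, h1, h2]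
  by_cases hx : x ∈ Set.Ioc 0 w <;> by_cases hy : y ∈ Set.Ioc 0 w
  · rw [reverseSegment_of_mem hx, reverseSegment_of_mem hy, cycleGraph_adj_sub_sub,
      twoOpt_zero_adj_iff_of_mem_Ioc_iff hw hwn (iff_of_true hx hy)]
  · exact crossing hx hy
  · rw [adj_comm, (twoOpt 0 w).adj_comm]
    exact crossing hy hx
  · rw [reverseSegment_of_notMem hx, reverseSegment_of_notMem hy,
      twoOpt_zero_adj_iff_of_mem_Ioc_iff hw hwn (iff_of_false hx hy)]

def twoOptZeroIso (hw : w ≠ 0) (hwn : w.val + 1 < n) : twoOpt 0 w ≃g cycleGraph n where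
  toEquiv := (reverseSegment_involutive hwn).toPerm
  map_rel_iff' := cycleGraph_adj_reverseSegment hw hwn _ _

end reverseSegment

end twoOpt

theorem twoSwappable_compl_cycleGraph : TwoSwappable (cycleGraph n)ᶜ := by
  intro e he
  induction e using Sym2.ind with | h u v => ?_
  have : NeZero n := ⟨u.pos.ne'⟩
  obtain ⟨huv, hadj⟩ : u ≠ v ∧ ¬(cycleGraph n).Adj u v := (compl_adj _ _ _).mp he
  have hwn : (v - u).val + 1 < n := by
    have := Fin.val_ne_of_ne huv
    rw [cycleGraph_adj', Fin.val_sub_eq_ite, Fin.val_sub_eq_ite] at hadj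
    rw [Fin.val_sub_eq_ite]
    split_ifs at hadj ⊢ <;> omega
  have hA : {s(u, v), s(u + 1, v + 1)} ⊆ (cycleGraph n)ᶜ.edgeSet := by
    rintro _ (rfl | rfl)
    · exact he
    · refine (compl_adj _ _ _).mpr ⟨(add_left_inj 1).not.mpr huv, ?_⟩
      rwa [cycleGraph_adj', add_sub_add_right_eq_sub, add_sub_add_right_eq_sub, ← cycleGraph_adj']
  have hB : {s(u, u + 1), s(v, v + 1)} ⊆ (cycleGraph n).edgeSet := by
    rintro _ (rfl | rfl) <;>
      exact cycleGraph_adj'.mpr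
        (Or.inr (by rw [add_sub_cancel_left, Fin.val_one_of_one_lt (by omega)]))
  refine ⟨{s(u, v), s(u + 1, v + 1)}, {s(u, u + 1), s(v, v + 1)}, Set.mem_insert _ _, hA,
    (Set.ncard_insert_le _ _).trans (by rw [Set.ncard_singleton]), by rwa [compl_compl], ⟨?_⟩⟩
  rw [← compl_deleteEdges_sup_fromEdgeSet hB hA]
  exact Iso.compl ((twoOptIsoSub u v).trans (twoOptZeroIso (sub_ne_zero.mpr huv.symm) hwn))

end SimpleGraph

namespace SimpleGraph.Walk

variable {V : Type} {G : SimpleGraph V} {a : V}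

theorem getVert_mod_length (p : G.Walk a a) {m : ℕ} (hm : m ≤ p.length) :
    p.getVert (m % p.length) = p.getVert m := by
  rcases hm.lt_or_eq with hm | rfl
  · rw [Nat.mod_eq_of_lt hm]
  · simp

variable [DecidableEq V] {p : G.Walk a a}

theorem IsHamiltonianCycle.exists_getVert_eq (hp : p.IsHamiltonianCycle) (x : V) :
    ∃ k < p.length, p.getVert k = x := by
  obtain ⟨m, hx, hm⟩ := mem_support_iff_exists_getVert.mp (hp.mem_support x)
  have := hp.isCycle.three_le_length
  exact ⟨m % p.length, Nat.mod_lt _ (by omega), (p.getVert_mod_length hm).trans hx⟩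

theorem IsHamiltonianCycle.nonempty_iso_cycleGraph (hp : p.IsHamiltonianCycle) :
    Nonempty (cycleGraph p.length ≃g fromEdgeSet {e | e ∈ p.edges}) := by
  have hlen := hp.isCycle.three_le_length
  have : NeZero p.length := ⟨by omega⟩
  set f : Fin p.length → V := fun k => p.getVert k
  have hf : f.Injective := fun k l h =>
    Fin.ext (hp.isCycle.getVert_injOn' (by simp; omega) (by simp; omega) h)
  have hf' : f.Surjective := fun x =>
    let ⟨k, hk, hx⟩ := hp.exists_getVert_eq x
    ⟨⟨k, hk⟩, hx⟩
  have hsucc (k : Fin p.length) : p.getVert (k + 1) = f (k + 1) := by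
    simp only [f, Fin.val_add, Fin.val_one', Nat.add_mod_mod, p.getVert_mod_length k.isLt]
  refine ⟨⟨Equiv.ofBijective f ⟨hf, hf'⟩, fun {s t} => ?_⟩⟩
  have hedge (i : Fin p.length) :
      s(p.getVert i, p.getVert (i + 1)) = s(f s, f t) ↔ s(i, i + 1) = s(s, t) := by
    rw [hsucc, ← (Sym2.map.injective hf).eq_iff, Sym2.map_mk, Sym2.map_mk]
  have h2 : 1 < p.length := by omega
  simp only [fromEdgeSet_adj, Set.mem_ofPred_eq, mk_mem_edges_iff_exists]
  change (∃ i < p.length, s(p.getVert i, p.getVert (i + 1)) = s(f s, f t)) ∧ f s ≠ f t ↔ _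
  rw [hf.ne_iff]
  refine ⟨fun ⟨⟨i, hi, h⟩, _⟩ => ?_, fun h => ⟨?_, h.ne⟩⟩
  · rw [cycleGraph_adj_iff_eq_add_one h2]
    rcases Sym2.eq_iff.mp ((hedge ⟨i, hi⟩).mp h) with ⟨rfl, rfl⟩ | ⟨rfl, rfl⟩
    exacts [Or.inr rfl, Or.inl rfl]
  · rcases (cycleGraph_adj_iff_eq_add_one h2).mp h with rfl | rfl
    exacts [⟨t, t.isLt, (hedge t).mpr Sym2.eq_swap⟩, ⟨s, s.isLt, (hedge s).mpr rfl⟩]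

end SimpleGraph.Walk

theorem stmt_3_general (n : ℕ) (a : Fin n)
    (p : (⊤ : SimpleGraph (Fin n)).Walk a a) (hp : p.IsHamiltonianCycle) :
    TwoSwappable ((⊤ : SimpleGraph (Fin n)) \
      SimpleGraph.fromEdgeSet {e | e ∈ p.edges}) := by
  obtain ⟨φ⟩ := hp.nonempty_iso_cycleGraph
  rw [top_sdiff]
  exact twoSwappable_compl_cycleGraph.of_iso φ.compl

/-- If `n ≥ 5` and `H` is a Hamiltonian cycle of the complete graph `K_n`, then
`K_n - H` (the complement of the `n`-cycle) is 2-swappable. -/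
theorem stmt_3 (n : ℕ) (hn : 5 ≤ n) (a : Fin n)
    (p : (⊤ : SimpleGraph (Fin n)).Walk a a) (hp : p.IsHamiltonianCycle) :
    TwoSwappable ((⊤ : SimpleGraph (Fin n)) \
      SimpleGraph.fromEdgeSet {e | e ∈ p.edges}) :=
  stmt_3_general n a p hp
end

section
/- Let n ≥ 3 and let M be a perfect matching of the complete bipartite graph K_{n,n}. Then the graph G = K_{n,n} − M (the complete bipartite graph with the edges of M removed) is 2-swappable. -/
open SimpleGraph
open scoped Classical

lemma aux_swap (n : ℕ) (M : (completeBipartiteGraph (Fin n) (Fin n)).Subgraph)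
    (hM : M.IsPerfectMatching) (a b : Fin n)
    (he : (completeBipartiteGraph (Fin n) (Fin n) \ M.spanningCoe).Adj (.inl a) (.inr b)) :
    ∃ A B : Set (Sym2 (Fin n ⊕ Fin n)),
      s(Sum.inl a, Sum.inr b) ∈ A ∧
      A ⊆ (completeBipartiteGraph (Fin n) (Fin n) \ M.spanningCoe).edgeSet ∧ A.ncard ≤ 2 ∧
      B ⊆ (completeBipartiteGraph (Fin n) (Fin n) \ M.spanningCoe)ᶜ.edgeSet ∧
      Nonempty (((completeBipartiteGraph (Fin n) (Fin n) \ M.spanningCoe).deleteEdges A ⊔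
        SimpleGraph.fromEdgeSet B) ≃g (completeBipartiteGraph (Fin n) (Fin n) \ M.spanningCoe)) := by
  have hM' := SimpleGraph.Subgraph.isPerfectMatching_iff.mp hM
  set G := completeBipartiteGraph (Fin n) (Fin n) \ M.spanningCoe with hG
  have key : ∀ p : Fin n, ∃! q : Fin n, M.Adj (Sum.inl p) (Sum.inr q) := by
    intro p
    obtain ⟨w, hw, hu⟩ := hM' (Sum.inl p)
    obtain ⟨q, rfl⟩ : ∃ q, w = Sum.inr q := by
      have h2 := M.adj_sub hw
      cases w with
      | inl x => simp [completeBipartiteGraph] at h2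
      | inr q => exact ⟨q, rfl⟩
    exact ⟨q, hw, fun y hy => Sum.inr.inj (hu _ hy)⟩
  have key' : ∀ q : Fin n, ∃! p : Fin n, M.Adj (Sum.inl p) (Sum.inr q) := by
    intro q
    obtain ⟨w, hw, hu⟩ := hM' (Sum.inr q)
    obtain ⟨p, rfl⟩ : ∃ p, w = Sum.inl p := by
      have h2 := M.adj_sub hw
      cases w with
      | inr x => simp [completeBipartiteGraph] at h2
      | inl p => exact ⟨p, rfl⟩
    exact ⟨p, hw.symm, fun y hy => Sum.inl.inj (hu _ hy.symm)⟩
  set f : Fin n → Fin n := fun p => (key p).choose with hfdef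
  have hf : ∀ p, M.Adj (Sum.inl p) (Sum.inr (f p)) := fun p => (key p).choose_spec.1
  have hfu : ∀ p q, M.Adj (Sum.inl p) (Sum.inr q) → q = f p :=
    fun p q h => (key p).choose_spec.2 q h
  have hGadj : ∀ p q : Fin n, G.Adj (Sum.inl p) (Sum.inr q) ↔ q ≠ f p := by
    intro p q
    rw [hG, SimpleGraph.sdiff_adj]
    constructor
    · rintro ⟨-, h⟩ rfl
      exact h (hf p)
    · intro h
      exact ⟨by simp, fun hadj => h (hfu p q hadj)⟩
  obtain ⟨c, hc, hcu⟩ := key' b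
  have hfc : f c = b := (hfu c b hc).symm
  have hbm : b ≠ f a := (hGadj a b).mp he
  have hac : a ≠ c := fun h => hbm (h ▸ hfc.symm)
  have hother : ∀ p : Fin n, p ≠ a → p ≠ c → f p ≠ b ∧ f p ≠ f a := by
    intro p hpa hpc
    refine ⟨fun hpb => hpc (hcu p (hpb ▸ hf p)), fun hpm => ?_⟩
    obtain ⟨d, hd, hdu⟩ := key' (f a)
    exact hpa ((hdu p (hpm ▸ hf p)).trans (hdu a (hf a)).symm)
  -- the purely combinatorial core
  have hcross : ∀ p q : Fin n,
      ((Equiv.swap b (f a)) q ≠ f p ↔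
        ((q ≠ f p ∧ ¬((p = a ∧ q = b) ∨ (p = c ∧ q = f a))) ∨
          ((p = a ∧ q = f a) ∨ (p = c ∧ q = b)))) := by
    intro p q
    rcases eq_or_ne p a with hpa | hpa
    · rw [hpa]
      constructor
      · intro h
        rcases eq_or_ne q (f a) with h2 | h2
        · exact Or.inr (Or.inl ⟨rfl, h2⟩)
        · rcases eq_or_ne q b with h3 | h3
          · exact absurd (by rw [h3, Equiv.swap_apply_left]) h
          · exact Or.inl ⟨h2, by rintro (⟨-, h4⟩ | ⟨h4, -⟩); exacts [h3 h4, hac h4]⟩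
      · rintro (⟨h1, h2⟩ | (⟨-, h3⟩ | ⟨h3, -⟩))
        · have hq : q ≠ b := fun hh => h2 (Or.inl ⟨rfl, hh⟩)
          rw [Equiv.swap_apply_of_ne_of_ne hq h1]; exact h1
        · rw [h3, Equiv.swap_apply_right]; exact hbm
        · exact absurd h3 hac
    · rcases eq_or_ne p c with hpc | hpc
      · rw [hpc, hfc]
        constructor
        · intro h
          rcases eq_or_ne q b with h2 | h2
          · exact Or.inr (Or.inr ⟨rfl, h2⟩)
          · rcases eq_or_ne q (f a) with h3 | h3
            · exact absurd (by rw [h3, Equiv.swap_apply_right]) h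
            · exact Or.inl ⟨h2, by
                rintro (⟨h4, -⟩ | ⟨-, h4⟩); exacts [hac h4.symm, h3 h4]⟩
        · rintro (⟨h1, h2⟩ | (⟨h3, -⟩ | ⟨-, h3⟩))
          · have hq : q ≠ f a := fun hh => h2 (Or.inr ⟨rfl, hh⟩)
            rw [Equiv.swap_apply_of_ne_of_ne h1 hq]; exact h1
          · exact absurd h3.symm hac
          · rw [h3, Equiv.swap_apply_left]; exact fun hh => hbm hh.symm
      · obtain ⟨h1, h2⟩ := hother p hpa hpc
        have hτfp : (Equiv.swap b (f a)) (f p) = f p := Equiv.swap_apply_of_ne_of_ne h1 h2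
        constructor
        · intro h
          refine Or.inl ⟨fun hq => h (by rw [hq, hτfp]), ?_⟩
          rintro (⟨h3, -⟩ | ⟨h3, -⟩); exacts [hpa h3, hpc h3]
        · rintro (⟨h3, -⟩ | (⟨h4, -⟩ | ⟨h4, -⟩))
          · intro hcon
            exact h3 ((Equiv.swap b (f a)).injective (by rw [hcon, hτfp]))
          · exact absurd h4 hpa
          · exact absurd h4 hpc
  -- edge-set membership normalizations
  have hAmem : ∀ p q : Fin n,
      (s(Sum.inl p, Sum.inr q) ∈
        ({s(Sum.inl a, Sum.inr b), s(Sum.inl c, Sum.inr (f a))} : Set (Sym2 (Fin n ⊕ Fin n))) ↔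
        ((p = a ∧ q = b) ∨ (p = c ∧ q = f a))) := by
    intro p q
    simp [Sym2.eq_iff]
  have hBmem : ∀ p q : Fin n,
      (s(Sum.inl p, Sum.inr q) ∈
        ({s(Sum.inl a, Sum.inr (f a)), s(Sum.inl c, Sum.inr b)} : Set (Sym2 (Fin n ⊕ Fin n))) ↔
        ((p = a ∧ q = f a) ∨ (p = c ∧ q = b))) := by
    intro p q
    simp [Sym2.eq_iff]
  refine ⟨{s(Sum.inl a, Sum.inr b), s(Sum.inl c, Sum.inr (f a))},
          {s(Sum.inl a, Sum.inr (f a)), s(Sum.inl c, Sum.inr b)}, by simp, ?_, ?_, ?_, ?_⟩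
  · rintro x (rfl | rfl)
    · exact he
    · rw [SimpleGraph.mem_edgeSet, hGadj]
      intro h
      exact hbm (h ▸ hfc).symm
  · exact (Set.ncard_insert_le _ _).trans (by simp)
  · rintro x (rfl | rfl) <;> rw [SimpleGraph.mem_edgeSet, SimpleGraph.compl_adj] <;>
      refine ⟨by simp, ?_⟩ <;> rw [hGadj] <;> simp [hfc]
  · set H := G.deleteEdges {s(Sum.inl a, Sum.inr b), s(Sum.inl c, Sum.inr (f a))} ⊔
      SimpleGraph.fromEdgeSet {s(Sum.inl a, Sum.inr (f a)), s(Sum.inl c, Sum.inr b)} with hH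
    have hHadj : ∀ p q : Fin n, (H.Adj (Sum.inl p) (Sum.inr q) ↔
        ((q ≠ f p ∧ ¬((p = a ∧ q = b) ∨ (p = c ∧ q = f a))) ∨
          ((p = a ∧ q = f a) ∨ (p = c ∧ q = b)))) := by
      intro p q
      rw [hH, SimpleGraph.sup_adj, SimpleGraph.deleteEdges_adj, SimpleGraph.fromEdgeSet_adj,
        hGadj, hAmem, hBmem]
      simp only [ne_eq, reduceCtorEq, not_false_eq_true, and_true]
    have hHle : ∀ u v : Fin n ⊕ Fin n, H.Adj u v →
        (completeBipartiteGraph (Fin n) (Fin n)).Adj u v := by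
      intro u v h
      rw [hH, SimpleGraph.sup_adj, SimpleGraph.deleteEdges_adj,
        SimpleGraph.fromEdgeSet_adj] at h
      rcases h with ⟨h, -⟩ | ⟨h, -⟩
      · rw [hG, SimpleGraph.sdiff_adj] at h
        exact h.1
      · simp only [Set.mem_insert_iff, Set.mem_singleton_iff, Sym2.eq_iff] at h
        rcases h with (⟨rfl, rfl⟩ | ⟨rfl, rfl⟩) | (⟨rfl, rfl⟩ | ⟨rfl, rfl⟩) <;> simp
    refine ⟨⟨Equiv.sumCongr (Equiv.refl _) (Equiv.swap b (f a)), ?_⟩⟩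
    intro x y
    cases x with
    | inl p =>
      cases y with
      | inl q =>
        simp only [Equiv.sumCongr_apply, Equiv.coe_refl, Sum.map_inl, id_eq]
        constructor
        · intro h
          rw [hG, SimpleGraph.sdiff_adj] at h
          exact absurd h.1 (by simp)
        · intro h
          exact absurd (hHle _ _ h) (by simp)
      | inr q =>
        simp only [Equiv.sumCongr_apply, Equiv.coe_refl, Sum.map_inl, Sum.map_inr, id_eq]
        rw [hGadj, hHadj]
        exact hcross p q
    | inr q =>
      cases y with
      | inl p =>
        simp only [Equiv.sumCongr_apply, Equiv.coe_refl, Sum.map_inl, Sum.map_inr, id_eq]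
        rw [G.adj_comm, H.adj_comm, hGadj, hHadj]
        exact hcross p q
      | inr q' =>
        simp only [Equiv.sumCongr_apply, Equiv.coe_refl, Sum.map_inr, id_eq]
        constructor
        · intro h
          rw [hG, SimpleGraph.sdiff_adj] at h
          exact absurd h.1 (by simp)
        · intro h
          exact absurd (hHle _ _ h) (by simp)

/-- If `n ≥ 3` and `M` is a perfect matching of the complete bipartite graph `K_{n,n}`,
then `K_{n,n} - M` is 2-swappable. -/
theorem stmt_4 (n : ℕ) (hn : 3 ≤ n)
    (M : (completeBipartiteGraph (Fin n) (Fin n)).Subgraph)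
    (hM : M.IsPerfectMatching) :
    TwoSwappable (completeBipartiteGraph (Fin n) (Fin n) \ M.spanningCoe) := by
  intro e he
  induction e using Sym2.ind with
  | _ u v =>
    rw [SimpleGraph.mem_edgeSet] at he
    cases u with
    | inl a =>
      cases v with
      | inl a' =>
        rw [SimpleGraph.sdiff_adj] at he
        exact absurd he.1 (by simp)
      | inr b => exact aux_swap n M hM a b he
    | inr b =>
      cases v with
      | inl a =>
        rw [Sym2.eq_swap]
        exact aux_swap n M hM a b he.symm
      | inr b' =>
        rw [SimpleGraph.sdiff_adj] at he
        exact absurd he.1 (by simp)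
end

section
/- Let n ≥ 4 be an even integer and let M be a perfect matching of the complete graph K_n. Then the edge reconstruction number of G = K_n − M is at least 3: for every multiset S of at most 2 edge-cards of G there exists a graph H not isomorphic to G whose edge-deck contains S as a sub-multiset. -/
open SimpleGraph
open scoped Classical

/-- Pull back a sub-multiset of a mapped multiset. -/
lemma aux_le_map_exists {α β : Type} [DecidableEq α] [DecidableEq β] (g : α → β) :
    ∀ (S : Multiset β) (t : Multiset α), S ≤ t.map g → ∃ s ≤ t, s.map g = S := by
  intro S
  induction S using Multiset.induction with
  | empty => exact fun t _ => ⟨0, Multiset.zero_le _, rfl⟩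
  | cons a S ih =>
    intro t h
    have ha : a ∈ t.map g := Multiset.mem_of_le h (Multiset.mem_cons_self a S)
    obtain ⟨b, hb, rfl⟩ := Multiset.mem_map.mp ha
    have h2 : S ≤ (t.map g).erase (g b) := by
      have h3 := Multiset.erase_le_erase (g b) h
      rwa [Multiset.erase_cons_head] at h3
    have h4 : (t.map g).erase (g b) = (t.erase b).map g := by
      conv_lhs => rw [← Multiset.cons_erase hb, Multiset.map_cons, Multiset.erase_cons_head]
    rw [h4] at h2
    obtain ⟨s, hs, hmap⟩ := ih (t.erase b) h2
    refine ⟨b ::ₘ s, ?_, by rw [Multiset.map_cons, hmap]⟩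
    calc b ::ₘ s ≤ b ::ₘ t.erase b := Multiset.cons_le_cons b hs
      _ = t := Multiset.cons_erase hb

/-- Equivariant extension lemma: given a fixed-point-free involution `σ` and two
`σ`-invariant finsets of equal cardinality, there is a `σ`-equivariant bijection
between them. -/
lemma aux_equivariant {X : Type} [Fintype X] [DecidableEq X] (σ : X → X)
    (hσσ : ∀ v, σ (σ v) = v) (hσne : ∀ v, σ v ≠ v) :
    ∀ (k : ℕ) (R S : Finset X), R.card = k → S.card = k →
      (∀ v ∈ R, σ v ∈ R) → (∀ v ∈ S, σ v ∈ S) →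
      ∃ f : X → X, Set.BijOn f ↑R ↑S ∧ ∀ v ∈ R, f (σ v) = σ (f v) := by
  intro k
  induction k using Nat.strong_induction_on with
  | _ k ih =>
    intro R S hR hS hRinv hSinv
    rcases R.eq_empty_or_nonempty with rfl | ⟨u, hu⟩
    · have hS0 : S = ∅ := Finset.card_eq_zero.mp (by simp at hR; omega)
      subst hS0
      exact ⟨id, by simp, by simp⟩
    · have hu' : σ u ∈ R := hRinv u hu
      have hune : σ u ≠ u := hσne u
      have hk2 : 2 ≤ k := by
        have : ({u, σ u} : Finset X) ⊆ R := by
          intro w hw; rcases Finset.mem_insert.mp hw with rfl | hw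
          · exact hu
          · rw [Finset.mem_singleton.mp hw]; exact hu'
        have hcard := Finset.card_le_card this
        rwa [Finset.card_insert_of_notMem (by simp [Ne.symm hune]),
          Finset.card_singleton, hR] at hcard
      have hSpos : S.Nonempty := Finset.card_pos.mp (by omega)
      obtain ⟨v, hv⟩ := hSpos
      have hv' : σ v ∈ S := hSinv v hv
      have hvne : σ v ≠ v := hσne v
      set R' := (R.erase u).erase (σ u) with hR'def
      set S' := (S.erase v).erase (σ v) with hS'def
      have hσuR : σ u ∈ R.erase u := Finset.mem_erase.mpr ⟨hune, hu'⟩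
      have hσvS : σ v ∈ S.erase v := Finset.mem_erase.mpr ⟨hvne, hv'⟩
      have hR'card : R'.card = k - 2 := by
        rw [hR'def, Finset.card_erase_of_mem hσuR, Finset.card_erase_of_mem hu, hR]; omega
      have hS'card : S'.card = k - 2 := by
        rw [hS'def, Finset.card_erase_of_mem hσvS, Finset.card_erase_of_mem hv, hS]; omega
      have hmemR' : ∀ w, w ∈ R' ↔ w ∈ R ∧ w ≠ u ∧ w ≠ σ u := by
        intro w; rw [hR'def]; simp only [Finset.mem_erase]; tauto
      have hmemS' : ∀ w, w ∈ S' ↔ w ∈ S ∧ w ≠ v ∧ w ≠ σ v := by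
        intro w; rw [hS'def]; simp only [Finset.mem_erase]; tauto
      have hR'inv : ∀ w ∈ R', σ w ∈ R' := by
        intro w hw
        rw [hmemR'] at hw ⊢
        obtain ⟨hw1, hw2, hw3⟩ := hw
        refine ⟨hRinv w hw1, ?_, ?_⟩
        · intro h; apply hw3; rw [← h, hσσ]
        · intro h; apply hw2
          have := congrArg σ h; rwa [hσσ, hσσ] at this
      have hS'inv : ∀ w ∈ S', σ w ∈ S' := by
        intro w hw
        rw [hmemS'] at hw ⊢
        obtain ⟨hw1, hw2, hw3⟩ := hw
        refine ⟨hSinv w hw1, ?_, ?_⟩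
        · intro h; apply hw3; rw [← h, hσσ]
        · intro h; apply hw2
          have := congrArg σ h; rwa [hσσ, hσσ] at this
      obtain ⟨f', hbij', hequiv'⟩ := ih (k - 2) (by omega) R' S' hR'card hS'card hR'inv hS'inv
      set f : X → X := fun w => if w = u then v else if w = σ u then σ v else f' w with hfdef
      have hfu : f u = v := by simp [hfdef]
      have hfσu : f (σ u) = σ v := by simp [hfdef, hune]
      have hfR' : ∀ w ∈ R', f w = f' w := by
        intro w hw
        rw [hmemR'] at hw
        simp [hfdef, hw.2.1, hw.2.2]
      have hS'sub : ∀ w ∈ S', w ∈ S := fun w hw => ((hmemS' w).mp hw).1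
      have hfval : ∀ w ∈ R', f w ∈ S' := by
        intro w hw; rw [hfR' w hw]; exact hbij'.1 hw
      refine ⟨f, ⟨?_, ?_, ?_⟩, ?_⟩
      · -- MapsTo
        intro w hw
        simp only [Finset.mem_coe] at hw ⊢
        by_cases h1 : w = u
        · rw [h1, hfu]; exact hv
        by_cases h2 : w = σ u
        · rw [h2, hfσu]; exact hv'
        · exact hS'sub _ (hfval w ((hmemR' w).mpr ⟨hw, h1, h2⟩))
      · -- InjOn
        intro w hw z hz h
        simp only [Finset.mem_coe] at hw hz
        by_cases h1 : w = u <;> by_cases h2 : z = u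
        · rw [h1, h2]
        · rw [h1, hfu] at h
          by_cases h3 : z = σ u
          · rw [h3, hfσu] at h; exact absurd h.symm hvne
          · have hz' := hfval z ((hmemR' z).mpr ⟨hz, h2, h3⟩)
            rw [← h] at hz'
            exact absurd ((hmemS' _).mp hz').2.1 (by simp)
        · rw [h2, hfu] at h
          by_cases h3 : w = σ u
          · rw [h3, hfσu] at h; exact absurd h hvne
          · have hw' := hfval w ((hmemR' w).mpr ⟨hw, h1, h3⟩)
            rw [h] at hw'
            exact absurd ((hmemS' _).mp hw').2.1 (by simp)
        · by_cases h3 : w = σ u <;> by_cases h4 : z = σ u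
          · rw [h3, h4]
          · have hz' := hfval z ((hmemR' z).mpr ⟨hz, h2, h4⟩)
            rw [h3, hfσu] at h
            rw [← h] at hz'
            exact absurd ((hmemS' _).mp hz').2.2 (by simp)
          · have hw' := hfval w ((hmemR' w).mpr ⟨hw, h1, h3⟩)
            rw [h4, hfσu] at h
            rw [h] at hw'
            exact absurd ((hmemS' _).mp hw').2.2 (by simp)
          · have hwR : w ∈ R' := (hmemR' w).mpr ⟨hw, h1, h3⟩
            have hzR : z ∈ R' := (hmemR' z).mpr ⟨hz, h2, h4⟩
            rw [hfR' w hwR, hfR' z hzR] at h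
            exact hbij'.2.1 (Finset.mem_coe.mpr hwR) (Finset.mem_coe.mpr hzR) h
      · -- SurjOn
        intro t ht
        simp only [Finset.mem_coe] at ht
        by_cases h1 : t = v
        · exact ⟨u, Finset.mem_coe.mpr hu, by rw [hfu, h1]⟩
        by_cases h2 : t = σ v
        · exact ⟨σ u, Finset.mem_coe.mpr hu', by rw [hfσu, h2]⟩
        · have ht' : t ∈ S' := (hmemS' t).mpr ⟨ht, h1, h2⟩
          obtain ⟨w, hw, hfw⟩ := hbij'.2.2 (Finset.mem_coe.mpr ht')
          simp only [Finset.mem_coe] at hw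
          refine ⟨w, Finset.mem_coe.mpr ((hmemR' w).mp hw).1, ?_⟩
          rw [hfR' w hw]; exact hfw
      · -- equivariance
        intro w hw
        by_cases h1 : w = u
        · rw [h1, hfσu, hfu]
        by_cases h2 : w = σ u
        · rw [h2, hσσ, hfu, hfσu, hσσ]
        · have hwR : w ∈ R' := (hmemR' w).mpr ⟨hw, h1, h2⟩
          have hσwR : σ w ∈ R' := hR'inv w hwR
          rw [hfR' w hwR, hfR' (σ w) hσwR]
          exact hequiv' w hwR


set_option maxHeartbeats 1000000 in
/-- The blocker construction: given `G = K_V - M` (with `σ` the matching involution) and an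
edge `ac` of `G`, the graph `H = G - ac + a(σa)` is not isomorphic to `G`, has a card equal
to `G - ac`, and has a card isomorphic to every card of `G`. -/
lemma aux_blocker {V : Type} [Fintype V] [DecidableEq V] (σ : V → V)
    (hσσ : ∀ v, σ (σ v) = v) (hσne : ∀ v, σ v ≠ v)
    (G : SimpleGraph V) (hG : ∀ u v, G.Adj u v ↔ u ≠ v ∧ σ u ≠ v)
    (a c : V) (hac : G.Adj a c) :
    ∃ (H : SimpleGraph V) (f₁ f₂ : Sym2 V), f₁ ∈ H.edgeSet ∧ f₂ ∈ H.edgeSet ∧ f₁ ≠ f₂ ∧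
      H.deleteEdges {f₁} = G.deleteEdges {s(a,c)} ∧
      (∀ x y : V, G.Adj x y →
        Nonempty ((G.deleteEdges {s(x,y)}) ≃g (H.deleteEdges {f₂}))) ∧
      ¬ Nonempty (H ≃g G) := by
  have hσinj : Function.Injective σ := fun p q h => by
    have := congrArg σ h; rwa [hσσ, hσσ] at this
  obtain ⟨b, hb⟩ : ∃ b, σ a = b := ⟨σ a, rfl⟩
  obtain ⟨d, hd⟩ : ∃ d, σ c = d := ⟨σ c, rfl⟩
  have hσb : σ b = a := by rw [← hb, hσσ]
  have hσd : σ d = c := by rw [← hd, hσσ]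
  have hba : b ≠ a := by rw [← hb]; exact hσne a
  have hab : a ≠ b := hba.symm
  have hdc : d ≠ c := by rw [← hd]; exact hσne c
  have hcd : c ≠ d := hdc.symm
  have hac' : a ≠ c := hac.ne
  have hbc : b ≠ c := by rw [← hb]; exact ((hG a c).mp hac).2
  have had : a ≠ d := by
    intro h
    exact hbc (by rw [← hb, h, ← hd, hσσ])
  have hbd : b ≠ d := by
    intro h
    exact hac' (hσinj (by rw [hb, hd, h]))
  -- the closing helper
  have hclose : ∀ p q u v : V, σ p = q → s(u,v) = s(p,q) → σ u = v := by
    intro p q u v hpq h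
    rcases Sym2.eq_iff.mp h with ⟨rfl, rfl⟩ | ⟨rfl, rfl⟩
    · exact hpq
    · rw [← hpq, hσσ]
  set H := (G \ fromEdgeSet {s(a,c)}) ⊔ fromEdgeSet {s(a,b)} with hHdef
  have hH : ∀ u v, H.Adj u v ↔
      ((G.Adj u v ∧ s(u,v) ≠ s(a,c)) ∨ (s(u,v) = s(a,b) ∧ u ≠ v)) := by
    intro u v
    have hne : G.Adj u v → u ≠ v := Adj.ne
    simp only [hHdef, sup_adj, sdiff_adj, fromEdgeSet_adj, Set.mem_singleton_iff]
    tauto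
  have hGab : ∀ u v : V, s(u,v) = s(a,b) → ¬ G.Adj u v := by
    intro u v hs hadj
    exact ((hG u v).mp hadj).2 (hclose a b u v hb hs)
  refine ⟨H, s(a,b), s(b,d), ?_, ?_, ?_, ?_, ?_, ?_⟩
  · rw [mem_edgeSet, hH]
    exact Or.inr ⟨rfl, hab⟩
  · rw [mem_edgeSet, hH]
    refine Or.inl ⟨(hG b d).mpr ⟨hbd, by rw [hσb]; exact had⟩, ?_⟩
    intro h
    rcases Sym2.eq_iff.mp h with ⟨h1, _⟩ | ⟨h1, _⟩
    · exact hba h1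
    · exact hbc h1
  · intro h
    rcases Sym2.eq_iff.mp h with ⟨h1, _⟩ | ⟨h1, _⟩
    · exact hab h1
    · exact had h1
  · ext u v
    simp only [deleteEdges_adj, Set.mem_singleton_iff, hH]
    have F := hGab u v
    tauto
  · -- every card of G is isomorphic to H - bd
    intro x y hxyadj
    have hxy : x ≠ y := hxyadj.ne
    have hσxy : σ x ≠ y := ((hG x y).mp hxyadj).2
    have hxx' : σ x ≠ x := hσne x
    have hyy' : σ y ≠ y := hσne y
    have hxy' : x ≠ σ y := fun h => hσxy (by rw [h, hσσ])
    have hx'y' : σ x ≠ σ y := fun h => hxy (hσinj h)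
    have hyx : y ≠ x := hxy.symm
    have hyx' : y ≠ σ x := hσxy.symm
    -- the two 4-element sets
    have hmemPfin : ∀ w, w ∈ (({x, σ x, y, σ y} : Finset V)ᶜ) ↔
        (w ≠ x ∧ w ≠ σ x ∧ w ≠ y ∧ w ≠ σ y) := by
      intro w
      simp [not_or]
    have hmemQfin : ∀ w, w ∈ (({a, b, c, d} : Finset V)ᶜ) ↔
        (w ≠ a ∧ w ≠ b ∧ w ≠ c ∧ w ≠ d) := by
      intro w
      simp [not_or]
    have hPcard : ({x, σ x, y, σ y} : Finset V).card = 4 := by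
      rw [Finset.card_insert_of_notMem (by simp [Ne.symm hxx', hxy, hxy']),
        Finset.card_insert_of_notMem (by simp [hσxy, hx'y']),
        Finset.card_insert_of_notMem (by simp [Ne.symm hyy']),
        Finset.card_singleton]
    have hQcard : ({a, b, c, d} : Finset V).card = 4 := by
      rw [Finset.card_insert_of_notMem (by simp [hab, hac', had]),
        Finset.card_insert_of_notMem (by simp [hbc, hbd]),
        Finset.card_insert_of_notMem (by simp [hcd]),
        Finset.card_singleton]
    have hPinv : ∀ w ∈ (({x, σ x, y, σ y} : Finset V)ᶜ), σ w ∈ (({x, σ x, y, σ y} : Finset V)ᶜ) := by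
      intro w hw
      rw [hmemPfin] at hw ⊢
      obtain ⟨h1, h2, h3, h4⟩ := hw
      exact ⟨fun h => h2 (by rw [← h, hσσ]), fun h => h1 (hσinj h),
        fun h => h4 (by rw [← h, hσσ]), fun h => h3 (hσinj h)⟩
    have hQinv : ∀ w ∈ (({a, b, c, d} : Finset V)ᶜ), σ w ∈ (({a, b, c, d} : Finset V)ᶜ) := by
      intro w hw
      rw [hmemQfin] at hw ⊢
      obtain ⟨h1, h2, h3, h4⟩ := hw
      refine ⟨?_, ?_, ?_, ?_⟩
      · intro h; exact h2 (by rw [← hb, ← h, hσσ])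
      · intro h; exact h1 (by rw [← hσb, ← h, hσσ])
      · intro h; exact h4 (by rw [← hd, ← h, hσσ])
      · intro h; exact h3 (by rw [← hσd, ← h, hσσ])
    obtain ⟨f, hbij, hequiv⟩ := aux_equivariant σ hσσ hσne (Fintype.card V - 4)
      (({x, σ x, y, σ y} : Finset V)ᶜ) (({a, b, c, d} : Finset V)ᶜ)
      (by rw [Finset.card_compl, hPcard]) (by rw [Finset.card_compl, hQcard]) hPinv hQinv
    have hfQ : ∀ u, u ≠ x → u ≠ σ x → u ≠ y → u ≠ σ y →
        (f u ≠ a ∧ f u ≠ b ∧ f u ≠ c ∧ f u ≠ d) := by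
      intro u h1 h2 h3 h4
      have := hbij.1 (Finset.mem_coe.mpr ((hmemPfin u).mpr ⟨h1, h2, h3, h4⟩))
      exact (hmemQfin _).mp (Finset.mem_coe.mp this)
    have hequivP : ∀ u, u ≠ x → u ≠ σ x → u ≠ y → u ≠ σ y → f (σ u) = σ (f u) := by
      intro u h1 h2 h3 h4
      exact hequiv u ((hmemPfin u).mpr ⟨h1, h2, h3, h4⟩)
    have hσnotP : ∀ u, u ≠ x → u ≠ σ x → u ≠ y → u ≠ σ y →
        (σ u ≠ x ∧ σ u ≠ σ x ∧ σ u ≠ y ∧ σ u ≠ σ y) := by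
      intro u h1 h2 h3 h4
      exact ⟨fun h => h2 (by rw [← h, hσσ]), fun h => h1 (hσinj h),
        fun h => h4 (by rw [← h, hσσ]), fun h => h3 (hσinj h)⟩
    set π₀ : V → V := fun u =>
      if u = x then c else if u = σ x then a else if u = y then d else if u = σ y then b
      else f u with hπ₀def
    have hπx : π₀ x = c := by simp [hπ₀def]
    have hπx' : π₀ (σ x) = a := by simp [hπ₀def, hxx']
    have hπy : π₀ y = d := by simp [hπ₀def, hyx, hyx']
    have hπy' : π₀ (σ y) = b := by
      simp [hπ₀def, Ne.symm hxy', Ne.symm hx'y', hyy']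
    have hπf : ∀ u, u ≠ x → u ≠ σ x → u ≠ y → u ≠ σ y → π₀ u = f u := by
      intro u h1 h2 h3 h4
      simp [hπ₀def, h1, h2, h3, h4]
    have hsurj : Function.Surjective π₀ := by
      intro w
      by_cases h1 : w = a
      · exact ⟨σ x, by rw [hπx', h1]⟩
      by_cases h2 : w = b
      · exact ⟨σ y, by rw [hπy', h2]⟩
      by_cases h3 : w = c
      · exact ⟨x, by rw [hπx, h3]⟩
      by_cases h4 : w = d
      · exact ⟨y, by rw [hπy, h4]⟩
      · obtain ⟨u, hu, hfu⟩ :=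
          hbij.2.2 (Finset.mem_coe.mpr ((hmemQfin w).mpr ⟨h1, h2, h3, h4⟩))
        have hu' := (hmemPfin u).mp (Finset.mem_coe.mp hu)
        exact ⟨u, by rw [hπf u hu'.1 hu'.2.1 hu'.2.2.1 hu'.2.2.2]; exact hfu⟩
    have hinj : Function.Injective π₀ := Finite.injective_iff_surjective.mpr hsurj
    -- adjacency characterizations
    have hA : ∀ u v, (G.deleteEdges {s(x,y)}).Adj u v ↔
        u ≠ v ∧ ¬(σ u = v ∨ s(u,v) = s(x,y)) := by
      intro u v
      rw [deleteEdges_adj, hG]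
      simp only [Set.mem_singleton_iff]
      tauto
    have hB : ∀ w z, (H.deleteEdges {s(b,d)}).Adj w z ↔
        w ≠ z ∧ ¬((σ w = z ∧ s(w,z) ≠ s(a,b)) ∨ s(w,z) = s(a,c) ∨ s(w,z) = s(b,d)) := by
      intro w z
      rw [deleteEdges_adj, hH, hG]
      simp only [Set.mem_singleton_iff]
      have F1 : s(w,z) = s(a,b) → σ w = z := hclose a b w z hb
      have F2 : s(w,z) = s(a,c) → ¬ σ w = z := by
        intro h hs
        rcases Sym2.eq_iff.mp h with ⟨h1, h2⟩ | ⟨h1, h2⟩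
        · exact hbc (by rw [← hb, ← h1, hs]; exact h2)
        · exact had ((by rw [← hd, ← h1, hs]; exact h2 : d = a)).symm
      have F3 : s(w,z) = s(b,d) → ¬ σ w = z := by
        intro h hs
        rcases Sym2.eq_iff.mp h with ⟨h1, h2⟩ | ⟨h1, h2⟩
        · exact had (by rw [← hσb, ← h1, hs]; exact h2)
        · exact hbc ((by rw [← hσd, ← h1, hs]; exact h2 : c = b)).symm
      have F4 : s(w,z) = s(a,b) → s(w,z) ≠ s(a,c) := by
        intro h1 h2
        rw [h1] at h2
        rcases Sym2.eq_iff.mp h2 with ⟨_, h3⟩ | ⟨h3, _⟩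
        · exact hbc h3
        · exact hac' h3
      have F5 : s(w,z) = s(a,b) → s(w,z) ≠ s(b,d) := by
        intro h1 h2
        rw [h1] at h2
        rcases Sym2.eq_iff.mp h2 with ⟨h3, _⟩ | ⟨h3, _⟩
        · exact hab h3
        · exact had h3
      constructor
      · rintro ⟨h1 | h1, h2⟩
        · obtain ⟨⟨hwz, hσ⟩, hs⟩ := h1
          refine ⟨hwz, fun hc => ?_⟩
          rcases hc with ⟨hc1, _⟩ | hc | hc
          exacts [hσ hc1, hs hc, h2 hc]
        · obtain ⟨hs, hwz⟩ := h1
          refine ⟨hwz, fun hc => ?_⟩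
          rcases hc with ⟨_, hc2⟩ | hc | hc
          exacts [hc2 hs, F4 hs hc, F5 hs hc]
      · rintro ⟨hwz, hbad⟩
        have hn2 : s(w,z) ≠ s(a,c) := fun hs => hbad (Or.inr (Or.inl hs))
        have hn3 : s(w,z) ≠ s(b,d) := fun hs => hbad (Or.inr (Or.inr hs))
        by_cases hs : s(w,z) = s(a,b)
        · exact ⟨Or.inr ⟨hs, hwz⟩, hn3⟩
        · exact ⟨Or.inl ⟨⟨hwz, fun hc => hbad (Or.inl ⟨hc, hs⟩)⟩, hn2⟩, hn3⟩
    -- the two implications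
    have fwd : ∀ u v, (σ u = v ∨ s(u,v) = s(x,y)) →
        ((σ (π₀ u) = π₀ v ∧ s(π₀ u, π₀ v) ≠ s(a,b)) ∨ s(π₀ u, π₀ v) = s(a,c) ∨
          s(π₀ u, π₀ v) = s(b,d)) := by
      intro u v h
      rcases h with h | h
      · by_cases h1 : u = x
        · have hv : v = σ x := by rw [← h, h1]
          rw [h1, hv, hπx, hπx']
          exact Or.inr (Or.inl Sym2.eq_swap)
        by_cases h2 : u = σ x
        · have hv : v = x := by rw [← h, h2, hσσ]
          rw [h2, hv, hπx', hπx]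
          exact Or.inr (Or.inl rfl)
        by_cases h3 : u = y
        · have hv : v = σ y := by rw [← h, h3]
          rw [h3, hv, hπy, hπy']
          exact Or.inr (Or.inr Sym2.eq_swap)
        by_cases h4 : u = σ y
        · have hv : v = y := by rw [← h, h4, hσσ]
          rw [h4, hv, hπy', hπy]
          exact Or.inr (Or.inr rfl)
        · have hσu := hσnotP u h1 h2 h3 h4
          have hπu : π₀ u = f u := hπf u h1 h2 h3 h4
          have hπv : π₀ v = f (σ u) := by
            rw [← h]
            exact hπf (σ u) hσu.1 hσu.2.1 hσu.2.2.1 hσu.2.2.2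
          rw [hπu, hπv, hequivP u h1 h2 h3 h4]
          refine Or.inl ⟨rfl, ?_⟩
          have hfu := hfQ u h1 h2 h3 h4
          intro hcon
          rcases Sym2.eq_iff.mp hcon with ⟨h5, _⟩ | ⟨h5, _⟩
          · exact hfu.1 h5
          · exact hfu.2.1 h5
      · rcases Sym2.eq_iff.mp h with ⟨h1, h2⟩ | ⟨h1, h2⟩
        · rw [h1, h2, hπx, hπy]
          refine Or.inl ⟨hd, ?_⟩
          intro hcon
          rcases Sym2.eq_iff.mp hcon with ⟨h5, _⟩ | ⟨h5, _⟩
          · exact hac' h5.symm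
          · exact hbc h5.symm
        · rw [h1, h2, hπy, hπx]
          refine Or.inl ⟨hσd, ?_⟩
          intro hcon
          rcases Sym2.eq_iff.mp hcon with ⟨h5, _⟩ | ⟨h5, _⟩
          · exact had h5.symm
          · exact hbd h5.symm
    have bwd : ∀ u v,
        ((σ (π₀ u) = π₀ v ∧ s(π₀ u, π₀ v) ≠ s(a,b)) ∨ s(π₀ u, π₀ v) = s(a,c) ∨
          s(π₀ u, π₀ v) = s(b,d)) → (σ u = v ∨ s(u,v) = s(x,y)) := by
      intro u v h
      rcases h with ⟨h, hne⟩ | h | h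
      · by_cases h1 : u = x
        · have hv : π₀ v = π₀ y := by rw [← h, h1, hπx, hπy, hd]
          right
          rw [h1, hinj hv]
        by_cases h2 : u = σ x
        · exfalso
          apply hne
          rw [h2, hπx', ← h, h2, hπx', hb]
        by_cases h3 : u = y
        · have hv : π₀ v = π₀ x := by rw [← h, h3, hπy, hπx, hσd]
          right
          rw [h3, hinj hv]
          exact Sym2.eq_swap
        by_cases h4 : u = σ y
        · exfalso
          apply hne
          rw [h4, hπy', ← h, h4, hπy', hσb]
          exact Sym2.eq_swap
        · have hσu := hσnotP u h1 h2 h3 h4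
          have hv : π₀ (σ u) = π₀ v := by
            rw [hπf (σ u) hσu.1 hσu.2.1 hσu.2.2.1 hσu.2.2.2,
              hequivP u h1 h2 h3 h4, ← hπf u h1 h2 h3 h4, h]
          exact Or.inl (hinj hv)
      · rcases Sym2.eq_iff.mp h with ⟨h1, h2⟩ | ⟨h1, h2⟩
        · have hu : u = σ x := hinj (by rw [h1, hπx'])
          have hv : v = x := hinj (by rw [h2, hπx])
          left
          rw [hu, hv, hσσ]
        · have hu : u = x := hinj (by rw [h1, hπx])
          have hv : v = σ x := hinj (by rw [h2, hπx'])
          left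
          rw [hu, hv]
      · rcases Sym2.eq_iff.mp h with ⟨h1, h2⟩ | ⟨h1, h2⟩
        · have hu : u = σ y := hinj (by rw [h1, hπy'])
          have hv : v = y := hinj (by rw [h2, hπy])
          left
          rw [hu, hv, hσσ]
        · have hu : u = y := hinj (by rw [h1, hπy])
          have hv : v = σ y := hinj (by rw [h2, hπy'])
          left
          rw [hu, hv]
    refine ⟨⟨Equiv.ofBijective π₀ ⟨hinj, hsurj⟩, ?_⟩⟩
    intro u v
    show (H.deleteEdges {s(b,d)}).Adj (π₀ u) (π₀ v) ↔ (G.deleteEdges {s(x,y)}).Adj u v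
    rw [hA, hB]
    constructor
    · rintro ⟨hne, hbad⟩
      exact ⟨fun hcon => hne (by rw [hcon]), fun hcon => hbad (fwd u v hcon)⟩
    · rintro ⟨hne, hbad⟩
      exact ⟨fun hcon => hne (hinj hcon), fun hcon => hbad (bwd u v hcon)⟩
  · -- the blocker is not isomorphic to G
    intro hcon
    obtain ⟨φ⟩ := hcon
    have hfull : ∀ w, w ≠ b → H.Adj b w := by
      intro w hw
      rw [hH]
      by_cases h1 : w = a
      · refine Or.inr ⟨by rw [h1]; exact Sym2.eq_swap, ?_⟩
        rw [h1]; exact hba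
      · refine Or.inl ⟨(hG b w).mpr ⟨Ne.symm hw, by rw [hσb]; exact fun h => h1 h.symm⟩, ?_⟩
        intro hs
        rcases Sym2.eq_iff.mp hs with ⟨h2, _⟩ | ⟨h2, _⟩
        · exact hba h2
        · exact hbc h2
    have hzb : φ.symm (σ (φ b)) ≠ b := by
      intro h
      have h2 : φ (φ.symm (σ (φ b))) = φ b := by rw [h]
      rw [RelIso.apply_symm_apply] at h2
      exact hσne (φ b) h2
    have hadj : H.Adj b (φ.symm (σ (φ b))) := hfull _ hzb
    have hGadj : G.Adj (φ b) (φ (φ.symm (σ (φ b)))) := φ.map_rel_iff.mpr hadj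
    rw [RelIso.apply_symm_apply] at hGadj
    exact ((hG _ _).mp hGadj).2 rfl

/-- If `n ≥ 4` is even and `M` is a perfect matching of `K_n`, then the edge
reconstruction number of `K_n - M` is at least 3. -/
theorem stmt_6 (n : ℕ) (hn : 4 ≤ n) (hev : Even n)
    (M : (⊤ : SimpleGraph (Fin n)).Subgraph) (hM : M.IsPerfectMatching) :
    ErnGeThree ((⊤ : SimpleGraph (Fin n)) \ M.spanningCoe) := by
  classical
  set G := (⊤ : SimpleGraph (Fin n)) \ M.spanningCoe with hGdef
  -- the matching involution
  set σ : Fin n → Fin n := fun v => (hM.1 (hM.2 v)).choose with hσdef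
  have hσadj : ∀ v, M.Adj v (σ v) := fun v => (hM.1 (hM.2 v)).choose_spec.1
  have hσuniq : ∀ v w, M.Adj v w → w = σ v := fun v w h => (hM.1 (hM.2 v)).choose_spec.2 w h
  have hσne : ∀ v, σ v ≠ v := fun v h => (hσadj v).ne h.symm
  have hσσ : ∀ v, σ (σ v) = v := fun v => (hσuniq (σ v) v (hσadj v).symm).symm
  have hMadj : ∀ u v, M.spanningCoe.Adj u v ↔ σ u = v := by
    intro u v
    rw [Subgraph.spanningCoe_adj]
    constructor
    · exact fun h => (hσuniq u v h).symm
    · intro h; rw [← h]; exact hσadj u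
  have hG : ∀ u v, G.Adj u v ↔ u ≠ v ∧ σ u ≠ v := by
    intro u v
    rw [hGdef, sdiff_adj, top_adj, hMadj]
  have v0 : Fin n := ⟨0, by omega⟩
  clear hGdef
  clear_value G
  intro S hS hcard
  obtain ⟨s', hle, hmap⟩ := aux_le_map_exists (fun e => G.deleteEdges {e}) S _ (by unfold edgeDeck at hS; exact hS)
  have hcard' : s'.card ≤ 2 := by
    rw [← hmap, Multiset.card_map] at hcard
    exact hcard
  have hmem : ∀ e ∈ s', e ∈ G.edgeSet := by
    intro e he
    have h := Multiset.mem_of_le hle he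
    rw [Finset.mem_val] at h
    exact Set.mem_toFinset.mp h
  have hc3 : s'.card = 0 ∨ s'.card = 1 ∨ s'.card = 2 := by omega
  rcases hc3 with h0 | h1 | h2
  · -- empty case : use the complete graph
    have hs0 : s' = 0 := Multiset.card_eq_zero.mp h0
    have hS0 : S = 0 := by rw [← hmap, hs0, Multiset.map_zero]
    refine ⟨⊤, ?_, 0, Multiset.zero_le _, by rw [hS0]; exact Multiset.Rel.zero⟩
    intro hcon
    obtain ⟨φ⟩ := hcon
    have hne : φ.symm v0 ≠ φ.symm (σ v0) := fun h => hσne v0 (φ.symm.injective h).symm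
    have : G.Adj v0 (σ v0) := φ.symm.map_rel_iff.mp ((top_adj _ _).mpr hne)
    exact ((hG _ _).mp this).2 rfl
  · -- one card
    obtain ⟨e, hs1⟩ := Multiset.card_eq_one.mp h1
    have he : e ∈ G.edgeSet := hmem e (by rw [hs1]; exact Multiset.mem_singleton_self e)
    obtain ⟨a, c, rfl⟩ : ∃ a c, e = s(a, c) := by
      induction e using Sym2.ind with | _ a c => exact ⟨a, c, rfl⟩
    have hac : G.Adj a c := (mem_edgeSet _).mp he
    obtain ⟨H, f₁, f₂, hf₁, hf₂, hne12, heq, hiso, hniso⟩ :=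
      aux_blocker σ hσσ hσne G hG a c hac
    refine ⟨H, hniso, {H.deleteEdges {f₁}}, ?_, ?_⟩
    · exact Multiset.singleton_le.mpr
        (Multiset.mem_map.mpr ⟨f₁, Finset.mem_val.mpr (mem_edgeFinset.mpr hf₁), rfl⟩)
    · rw [← hmap, hs1, Multiset.map_singleton]
      have : ({G.deleteEdges {s(a,c)}} : Multiset _) = G.deleteEdges {s(a,c)} ::ₘ 0 := rfl
      rw [this]
      have : ({H.deleteEdges {f₁}} : Multiset _) = H.deleteEdges {f₁} ::ₘ 0 := rfl
      rw [this]
      exact Multiset.Rel.cons (by rw [heq]; exact ⟨⟨Equiv.refl _, Iff.rfl⟩⟩) Multiset.Rel.zero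
  · -- two cards
    obtain ⟨e₁, e₂, hs2⟩ := Multiset.card_eq_two.mp h2
    have he₁ : e₁ ∈ G.edgeSet := hmem e₁ (by rw [hs2]; simp)
    have he₂ : e₂ ∈ G.edgeSet := hmem e₂ (by rw [hs2]; simp)
    obtain ⟨a, c, rfl⟩ : ∃ a c, e₁ = s(a, c) := by
      induction e₁ using Sym2.ind with | _ a c => exact ⟨a, c, rfl⟩
    obtain ⟨x, y, rfl⟩ : ∃ x y, e₂ = s(x, y) := by
      induction e₂ using Sym2.ind with | _ x y => exact ⟨x, y, rfl⟩
    have hac : G.Adj a c := (mem_edgeSet _).mp he₁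
    have hxy : G.Adj x y := (mem_edgeSet _).mp he₂
    obtain ⟨H, f₁, f₂, hf₁, hf₂, hne12, heq, hiso, hniso⟩ :=
      aux_blocker σ hσσ hσne G hG a c hac
    refine ⟨H, hniso, (H.deleteEdges {f₁}) ::ₘ {H.deleteEdges {f₂}}, ?_, ?_⟩
    · have hsub : ({f₁, f₂} : Finset (Sym2 (Fin n))) ⊆ H.edgeFinset := by
        intro w hw
        rcases Finset.mem_insert.mp hw with rfl | hw
        · exact mem_edgeFinset.mpr hf₁
        · rw [Finset.mem_singleton.mp hw]; exact mem_edgeFinset.mpr hf₂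
      have hval : ({f₁, f₂} : Finset (Sym2 (Fin n))).val = f₁ ::ₘ {f₂} := by
        rw [Finset.insert_val_of_notMem (by simp [hne12]), Finset.singleton_val]
      have hle2 : (f₁ ::ₘ {f₂} : Multiset _) ≤ H.edgeFinset.val := by
        rw [← hval]
        exact Finset.val_le_iff.mpr hsub
      have := Multiset.map_le_map (f := fun e => H.deleteEdges {e}) hle2
      rw [Multiset.map_cons, Multiset.map_singleton] at this
      exact this
    · rw [← hmap, hs2]
      have h1 : ({s(a,c), s(x,y)} : Multiset _).map (fun e => G.deleteEdges {e}) =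
          G.deleteEdges {s(a,c)} ::ₘ G.deleteEdges {s(x,y)} ::ₘ 0 := by
        rw [show ({s(a,c), s(x,y)} : Multiset _) = s(a,c) ::ₘ {s(x,y)} from rfl,
          Multiset.map_cons, Multiset.map_singleton]
        rfl
      rw [h1]
      have h2 : ((H.deleteEdges {f₁}) ::ₘ {H.deleteEdges {f₂}} : Multiset _) =
          (H.deleteEdges {f₁}) ::ₘ (H.deleteEdges {f₂}) ::ₘ 0 := rfl
      rw [h2]
      exact Multiset.Rel.cons (by rw [heq]; exact ⟨⟨Equiv.refl _, Iff.rfl⟩⟩)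
        (Multiset.Rel.cons (hiso x y hxy) Multiset.Rel.zero)
end

section
/- Let n ≥ 3 and let M be a perfect matching of the complete bipartite graph K_{n,n}. Then the edge reconstruction number of G = K_{n,n} − M is at least 3: for every multiset S of at most 2 edge-cards of G there exists a graph H not isomorphic to G whose edge-deck contains S as a sub-multiset. -/
/-!
`K_{n,n} − M` is the crown graph in which `inl a` and `inr b` are adjacent iff `b ≠ σ a`, where
`σ` is the bijection read off `M`. A permutation `π` of the left side together with `σ π σ⁻¹` on
the right is an automorphism, and these act transitively on edges, so every edge-card is
isomorphic to `C = G − {inl i₀, inr (σ i₁)}`. The blocker is `H = C + {inl i₀, inr (σ i₀)}`, the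
crown graph of `σ` updated at `i₀` to `σ i₁`. Its vertex `inr (σ i₀)` has degree `n` while `G` is
`(n - 1)`-regular, yet `H − {inl i₀, inr (σ i₀)} = C`, and swapping `inl i₀` with `inl i₁` maps
`H − {inl i₁, inr (σ i₀)}` onto `C`.
-/

open SimpleGraph
open scoped Classical

open Finset

namespace SimpleGraph

variable {α β α' β' : Type*}

def bipartiteOf (r : α → β → Prop) : SimpleGraph (α ⊕ β) where
  Adj
    | .inl a, .inr b => r a b
    | .inr b, .inl a => r a b
    | _, _ => False
  symm := ⟨by rintro (a | b) (a' | b') <;> simp⟩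
  loopless := ⟨by rintro (a | b) <;> simp⟩

section bipartiteOf

variable {r : α → β → Prop}

@[simp] lemma bipartiteOf_adj_inl_inr {a : α} {b : β} :
    (bipartiteOf r).Adj (.inl a) (.inr b) ↔ r a b := Iff.rfl

@[simp] lemma bipartiteOf_adj_inr_inl {a : α} {b : β} :
    (bipartiteOf r).Adj (.inr b) (.inl a) ↔ r a b := Iff.rfl

@[simp] lemma not_bipartiteOf_adj_inl_inl {a a' : α} :
    ¬ (bipartiteOf r).Adj (.inl a) (.inl a') := not_false

@[simp] lemma not_bipartiteOf_adj_inr_inr {b b' : β} :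
    ¬ (bipartiteOf r).Adj (.inr b) (.inr b') := not_false

lemma exists_eq_of_mem_edgeSet_bipartiteOf {e : Sym2 (α ⊕ β)}
    (he : e ∈ (bipartiteOf r).edgeSet) : ∃ a b, r a b ∧ e = s(.inl a, .inr b) := by
  induction e using Sym2.ind with
  | _ v w =>
    rcases v with a | b <;> rcases w with a' | b'
    · simp at he
    · exact ⟨a, b', he, rfl⟩
    · exact ⟨a', b, he, Sym2.eq_swap⟩
    · simp at he

lemma bipartiteOf_deleteEdges (a : α) (b : β) :
    (bipartiteOf r).deleteEdges {s(.inl a, .inr b)} =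
      bipartiteOf fun x y => r x y ∧ ¬ (x = a ∧ y = b) := by
  ext (x | y) (x' | y') <;> simp [and_comm]

def bipartiteOfCongr {r' : α' → β' → Prop} (π : α ≃ α') (ρ : β ≃ β')
    (h : ∀ a b, r' (π a) (ρ b) ↔ r a b) : bipartiteOf r ≃g bipartiteOf r' where
  toEquiv := π.sumCongr ρ
  map_rel_iff' := by rintro (a | b) (a' | b') <;> simp [h]

variable [Fintype α] [Fintype β] [DecidableRel r]

lemma degree_bipartiteOf_inl (a : α) : (bipartiteOf r).degree (.inl a) = #{b | r a b} := by
  have : (bipartiteOf r).neighborFinset (.inl a) = ({b | r a b} : Finset β).map .inr := by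
    ext (x | y) <;> simp
  rw [← card_neighborFinset_eq_degree, this, card_map]

lemma degree_bipartiteOf_inr (b : β) : (bipartiteOf r).degree (.inr b) = #{a | r a b} := by
  have : (bipartiteOf r).neighborFinset (.inr b) = ({a | r a b} : Finset α).map .inl := by
    ext (x | y) <;> simp
  rw [← card_neighborFinset_eq_degree, this, card_map]

end bipartiteOf

def crownGraph (f : α → β) : SimpleGraph (α ⊕ β) := bipartiteOf fun a b => b ≠ f a

section crownGraph

lemma crownGraph_deleteEdges_iso (σ : α ≃ β) {i i' : α} {j j' : β} (h : j ≠ σ i)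
    (h' : j' ≠ σ i') :
    Nonempty ((crownGraph σ).deleteEdges {s(.inl i, .inr j)} ≃g
      (crownGraph σ).deleteEdges {s(.inl i', .inr j')}) := by
  obtain ⟨π, rfl, hπ⟩ : ∃ π : Equiv.Perm α, π i = i' ∧ π (σ.symm j) = σ.symm j' :=
    MulAction.is_two_pretransitive_iff.mp (Equiv.Perm.isMultiplyPretransitive α 2)
      (by rwa [Ne, eq_comm, Equiv.symm_apply_eq]) (by rwa [Ne, eq_comm, Equiv.symm_apply_eq])
  obtain rfl : σ (π (σ.symm j)) = j' := by rw [hπ, Equiv.apply_symm_apply]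
  rw [crownGraph, bipartiteOf_deleteEdges, bipartiteOf_deleteEdges]
  refine ⟨bipartiteOfCongr π (σ.symm.trans (π.trans σ)) fun a b => ?_⟩
  simp [Equiv.symm_apply_eq]

variable [Fintype α] [Fintype β]

lemma degree_crownGraph (σ : α ≃ β) (v : α ⊕ β) :
    (crownGraph σ).degree v = Fintype.card α - 1 := by
  rcases v with a | b
  · have : ({b | b ≠ σ a} : Finset β) = univ.erase (σ a) := by ext; simp
    rw [crownGraph, degree_bipartiteOf_inl, this, card_erase_of_mem (mem_univ _), card_univ,
      Fintype.card_congr σ]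
  · have : ({a | b ≠ σ a} : Finset α) = univ.erase (σ.symm b) := by
      ext; simp [Equiv.eq_symm_apply, eq_comm]
    rw [crownGraph, degree_bipartiteOf_inr, this, card_erase_of_mem (mem_univ _), card_univ]

lemma degree_crownGraph_inr_of_notMem_range {f : α → β} {b : β} (hb : b ∉ Set.range f) :
    (crownGraph f).degree (.inr b) = Fintype.card α := by
  have : ({a | b ≠ f a} : Finset α) = univ := eq_univ_of_forall fun a => by
    simpa using fun h => hb ⟨a, h.symm⟩
  rw [crownGraph, degree_bipartiteOf_inr, this, card_univ]

lemma not_nonempty_iso_crownGraph [Nonempty α] {f : α → β} {b : β} (hb : b ∉ Set.range f)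
    (σ : α ≃ β) : ¬ Nonempty (crownGraph f ≃g crownGraph σ) := by
  rintro ⟨φ⟩
  have := φ.degree_eq (.inr b)
  rw [degree_crownGraph, degree_crownGraph_inr_of_notMem_range hb] at this
  have := Fintype.card_pos (α := α)
  omega

end crownGraph

section blocker

variable (σ : α ≃ β) {i₀ i₁ : α}

lemma crownGraph_update_deleteEdges_eq :
    (crownGraph (Function.update σ i₀ (σ i₁))).deleteEdges {s(.inl i₀, .inr (σ i₀))} =
      (crownGraph σ).deleteEdges {s(.inl i₀, .inr (σ i₁))} := by
  rw [crownGraph, crownGraph, bipartiteOf_deleteEdges, bipartiteOf_deleteEdges]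
  congr! 2 with a b
  by_cases ha : a = i₀ <;> simp [ha, and_comm]

lemma crownGraph_update_deleteEdges_iso (h : i₀ ≠ i₁) :
    Nonempty ((crownGraph (Function.update σ i₀ (σ i₁))).deleteEdges {s(.inl i₁, .inr (σ i₀))} ≃g
      (crownGraph σ).deleteEdges {s(.inl i₀, .inr (σ i₁))}) := by
  rw [crownGraph, crownGraph, bipartiteOf_deleteEdges, bipartiteOf_deleteEdges]
  refine ⟨bipartiteOfCongr (Equiv.swap i₀ i₁) (Equiv.refl β) fun a b => ?_⟩
  rcases eq_or_ne a i₀ with rfl | ha₀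
  · simp [h, h.symm]
  rcases eq_or_ne a i₁ with rfl | ha₁
  · simp [Function.update_of_ne ha₀, and_comm]
  · simp [Equiv.swap_apply_of_ne_of_ne ha₀ ha₁, ha₀, ha₁]

end blocker

lemma Subgraph.IsPerfectMatching.exists_equiv {M : (completeBipartiteGraph α β).Subgraph}
    (hM : M.IsPerfectMatching) : ∃ σ : α ≃ β, ∀ a b, M.Adj (.inl a) (.inr b) ↔ b = σ a := by
  rw [Subgraph.isPerfectMatching_iff] at hM
  have hl : ∀ a, ∃! b, M.Adj (.inl a) (.inr b) := fun a => by
    obtain ⟨a' | b, hb, hu⟩ := hM (.inl a)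
    · simpa using M.adj_sub hb
    · exact ⟨b, hb, fun b' hb' => Sum.inr_injective (hu _ hb')⟩
  have hr : ∀ b, ∃! a, M.Adj (.inl a) (.inr b) := fun b => by
    obtain ⟨a | b', ha, hu⟩ := hM (.inr b)
    · exact ⟨a, ha.symm, fun a' ha' => Sum.inl_injective (hu _ ha'.symm)⟩
    · simpa using M.adj_sub ha
  choose f hf hfu using hl
  choose g hg hgu using hr
  refine ⟨⟨f, g, fun a => (hgu _ a (hf a)).symm, fun b => (hfu _ b (hg b)).symm⟩, fun a b => ?_⟩
  exact ⟨hfu a b, fun h => h ▸ hf a⟩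

lemma completeBipartiteGraph_sdiff_eq_crownGraph {M : (completeBipartiteGraph α β).Subgraph}
    {σ : α ≃ β} (hσ : ∀ a b, M.Adj (.inl a) (.inr b) ↔ b = σ a) :
    completeBipartiteGraph α β \ M.spanningCoe = crownGraph σ := by
  ext (a | b) (a' | b')
  · simp [crownGraph]
  · simp [crownGraph, hσ]
  · simp [crownGraph, M.adj_comm (.inr b), hσ]
  · simp [crownGraph]

end SimpleGraph

theorem ErnGeThree.of_blocker {V : Type} [Fintype V] {G H C : SimpleGraph V}
    (hG : ∀ e ∈ G.edgeSet, Nonempty (G.deleteEdges {e} ≃g C)) (hHG : ¬ Nonempty (H ≃g G))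
    {F : Finset (Sym2 V)} (hFH : ↑F ⊆ H.edgeSet) (hF : 2 ≤ #F)
    (hHF : ∀ e ∈ F, Nonempty (H.deleteEdges {e} ≃g C)) : ErnGeThree G := by
  intro S hS hS₂
  obtain ⟨F', hF'F, hF'⟩ := exists_subset_card_eq (hS₂.trans hF)
  refine ⟨H, hHG, F'.val.map fun e => H.deleteEdges {e},
    Multiset.map_le_map (val_le_iff.mpr fun e he => mem_edgeFinset.mpr (hFH (hF'F he))), ?_⟩
  refine Multiset.rel_of_forall (fun A B hA hB => ?_) (by simp [hF'])
  obtain ⟨e, he, rfl⟩ := Multiset.mem_map.mp (Multiset.mem_of_le hS hA)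
  obtain ⟨f, hf, rfl⟩ := Multiset.mem_map.mp hB
  obtain ⟨φ⟩ := hG e (mem_edgeFinset.mp he)
  obtain ⟨ψ⟩ := hHF f (hF'F hf)
  exact ⟨φ.trans ψ.symm⟩

theorem ernGeThree_crownGraph {α β : Type} [Fintype α] [Fintype β] [Nontrivial α]
    (σ : α ≃ β) : ErnGeThree (crownGraph σ) := by
  obtain ⟨i₀, i₁, h⟩ := exists_pair_ne α
  have hσ : σ i₀ ≠ σ i₁ := σ.injective.ne h
  refine ErnGeThree.of_blocker (C := (crownGraph σ).deleteEdges {s(.inl i₀, .inr (σ i₁))})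
    (H := crownGraph (Function.update σ i₀ (σ i₁)))
    (F := {s(.inl i₀, .inr (σ i₀)), s(.inl i₁, .inr (σ i₀))}) ?_ ?_ ?_ ?_ ?_
  · intro e he
    obtain ⟨i, j, hij, rfl⟩ := exists_eq_of_mem_edgeSet_bipartiteOf he
    exact crownGraph_deleteEdges_iso σ hij hσ.symm
  · refine not_nonempty_iso_crownGraph (b := σ i₀) ?_ σ
    rintro ⟨a, ha⟩
    rcases eq_or_ne a i₀ with rfl | ha₀
    · simp [hσ.symm] at ha
    · simp [ha₀] at ha
  · simp [Set.insert_subset_iff, crownGraph, Function.update_apply, h, h.symm]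
  · rw [card_pair (by simp [h])]
  · simp only [mem_insert, mem_singleton, forall_eq_or_imp, forall_eq]
    exact ⟨crownGraph_update_deleteEdges_eq σ ▸ ⟨Iso.refl⟩, crownGraph_update_deleteEdges_iso σ h⟩

/-- If `n ≥ 3` and `M` is a perfect matching of `K_{n,n}`, then the edge reconstruction
number of `K_{n,n} - M` is at least 3. -/
theorem stmt_8 (n : ℕ) (hn : 3 ≤ n)
    (M : (completeBipartiteGraph (Fin n) (Fin n)).Subgraph)
    (hM : M.IsPerfectMatching) :
    ErnGeThree (completeBipartiteGraph (Fin n) (Fin n) \ M.spanningCoe) := by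
  obtain ⟨σ, hσ⟩ := hM.exists_equiv
  have : Nontrivial (Fin n) := Fin.nontrivial_iff_two_le.mpr (by omega)
  rw [completeBipartiteGraph_sdiff_eq_crownGraph hσ]
  exact ernGeThree_crownGraph σ
end

section
/- The 3-dimensional hypercube graph Q_3 is 2-swappable. -/
open SimpleGraph
open scoped Classical

/-- The 3-dimensional hypercube graph: vertices are binary strings of length 3, with
edges joining strings differing in exactly one coordinate. -/
def Q3 : SimpleGraph (Fin 3 → Bool) where
  Adj x y := (Finset.univ.filter fun i => x i ≠ y i).card = 1
  symm := by
    constructor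
    intro x y h
    convert h using 2
    ext i
    simp only [Finset.mem_filter]
    exact and_congr_right fun _ => ne_comm
  loopless := by
    constructor
    intro x h
    simp at h

/-! For an edge `xy` of `Q₃`, delete `xy` and its antipodal edge `x̄ȳ` (where `x̄ = xᶜ`) and
add the diagonals `xx̄` and `yȳ`. In `Q₃` the vertices `y` and `x̄` are non-adjacent, and apart
from `y ~ x` and `x̄ ~ ȳ` they have the same two neighbours. Hence exchanging `y` and `x̄` maps
the new graph isomorphically onto `Q₃`. -/

namespace SimpleGraph

def swapEdgesIsoOfTwins {V : Type*} [DecidableEq V] (G : SimpleGraph V) {x y z w : V}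
    (hxy : G.Adj x y) (hzw : G.Adj z w) (hyw : ¬G.Adj y w) (hxw : ¬G.Adj x w) (hyz : ¬G.Adj y z)
    (htwin : ∀ v, v ≠ x → v ≠ z → (G.Adj y v ↔ G.Adj w v)) :
    (G.deleteEdges {s(x, y), s(z, w)} ⊔ fromEdgeSet {s(x, w), s(y, z)}) ≃g G where
  toEquiv := Equiv.swap y w
  map_rel_iff' {a b} := by
    simp only [Equiv.swap_apply_def, sup_adj, deleteEdges_adj, fromEdgeSet_adj,
      Set.mem_insert_iff, Set.mem_singleton_iff, Sym2.eq_iff]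
    grind [Adj.symm, Adj.ne]

end SimpleGraph

-- A computable instance, so that `decide` does not pick up `Classical.propDecidable`.
instance : DecidableRel Q3.Adj := fun _ _ => Nat.decEq _ _

lemma Q3_adj_compl_compl : ∀ x y, Q3.Adj x y → Q3.Adj xᶜ yᶜ := by decide

lemma Q3_compl_adj_compl_self : ∀ x, Q3ᶜ.Adj x xᶜ := by decide

lemma Q3_not_adj_compl_of_adj : ∀ x y, Q3.Adj x y → ¬Q3.Adj y xᶜ := by decide

set_option synthInstance.maxSize 256 in
lemma Q3_adj_iff_adj_compl_of_ne : ∀ x y, Q3.Adj x y → ∀ v, v ≠ x → v ≠ yᶜ →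
    (Q3.Adj y v ↔ Q3.Adj xᶜ v) := by
  decide

/-- The 3-dimensional hypercube graph `Q₃` is 2-swappable. -/
theorem stmt_11 : TwoSwappable Q3 := by
  intro e he
  induction e using Sym2.ind with
  | _ x y =>
    rw [mem_edgeSet] at he
    have hx := Q3_compl_adj_compl_self x
    have hy := Q3_compl_adj_compl_self y
    have hyx := Q3_adj_compl_compl x y he
    refine ⟨{s(x, y), s(yᶜ, xᶜ)}, {s(x, xᶜ), s(y, yᶜ)}, Set.mem_insert _ _, ?_,
      (Set.ncard_insert_le _ _).trans (by rw [Set.ncard_singleton]), ?_,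
      ⟨Q3.swapEdgesIsoOfTwins he hyx.symm (Q3_not_adj_compl_of_adj x y he) hx.2 hy.2
        (Q3_adj_iff_adj_compl_of_ne x y he)⟩⟩
    · rintro f (rfl | rfl)
      exacts [he, hyx.symm]
    · rintro f (rfl | rfl)
      exacts [hx, hy]
end

section
/- Let n ≥ 5, let H be a Hamiltonian cycle of the complete graph K_n, and let {u,v} be a non-edge of H (a chord). The edge {u,v} divides H into two edge-disjoint u–v paths H_1 and H_2; choose an edge {u,u'} of H_1 incident to u and an edge {v,v'} of H_2 incident to v. Then the edge set (H − {u,u'} − {v,v'}) + {u,v} + {u',v'} is again a Hamiltonian cycle of K_n. -/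
open SimpleGraph
open scoped Classical

/-
Removing `uu'` from the `u`–`v` path `H₁` and `vv'` from `H₂` leaves a path `P` from `u'` to `v`
and a path `Q` from `u` to `v'`. Since `H₁` and `H₂` cover the cycle, the vertex lists of `Q` and
`P` together contain every vertex; they have `n - 2` edges, hence `n` entries, so each vertex occurs
exactly once. Therefore `Q, v'u', P` is a Hamiltonian path from `u` to `v`, and the chord `vu`
closes it to a Hamiltonian cycle.
-/

theorem List.nodup_of_forall_mem_of_length_le_card {α : Type*} [Fintype α] [DecidableEq α]
    {l : List α} (hmem : ∀ x, x ∈ l) (hlen : l.length ≤ Fintype.card α) : l.Nodup := by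
  have huniv : l.toFinset = Finset.univ := Finset.eq_univ_of_forall (by simpa using hmem)
  refine Multiset.toFinset_card_eq_card_iff_nodup.mp (le_antisymm (List.toFinset_card_le l) ?_)
  change l.length ≤ l.toFinset.card
  rwa [huniv, Finset.card_univ]

namespace SimpleGraph.Walk

variable {V : Type*} {G : SimpleGraph V} {a u v u' v' w : V}

theorem IsPath.exists_eq_cons_of_mem_edges {p : G.Walk u v} (hp : p.IsPath)
    (he : s(u, w) ∈ p.edges) : ∃ (h : G.Adj u w) (q : G.Walk w v), p = cons h q := by
  obtain rfl := hp.eq_snd_of_mem_edges he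
  have hnil : ¬p.Nil := edges_eq_nil.not.mp (List.ne_nil_of_mem he)
  exact ⟨p.adj_snd hnil, p.tail, (p.cons_tail_eq hnil).symm⟩

theorem IsPath.exists_eq_concat_of_mem_edges {p : G.Walk u v} (hp : p.IsPath)
    (he : s(v, w) ∈ p.edges) : ∃ (q : G.Walk u w) (h : G.Adj w v), p = q.concat h := by
  obtain rfl := hp.eq_penultimate_of_mem_edges he
  have hnil : ¬p.Nil := edges_eq_nil.not.mp (List.ne_nil_of_mem he)
  exact ⟨p.dropLast, p.adj_penultimate hnil, (p.concat_dropLast _).symm⟩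

theorem IsTrail.length_eq_add_of_mem_edges_iff {p : G.Walk a a} {q r : G.Walk u v}
    (hp : p.IsTrail) (hq : q.IsTrail) (hr : r.IsTrail) (hdisj : ∀ e, e ∈ q.edges → e ∉ r.edges)
    (hpqr : ∀ e, e ∈ p.edges ↔ e ∈ q.edges ∨ e ∈ r.edges) : p.length = q.length + r.length := by
  have hperm : p.edges.Perm (q.edges ++ r.edges) :=
    (List.perm_ext_iff_of_nodup hp.edges_nodup (hq.edges_nodup.append hr.edges_nodup hdisj)).mpr
      fun e => by rw [List.mem_append, hpqr]
  simpa using hperm.length_eq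

variable [DecidableEq V]

theorem IsHamiltonianCycle.mem_support_or_mem_support {p : G.Walk a a}
    (hp : p.IsHamiltonianCycle) {q : G.Walk u v} {r : G.Walk u' v'}
    (hpqr : ∀ e ∈ p.edges, e ∈ q.edges ∨ e ∈ r.edges) (x : V) : x ∈ q.support ∨ x ∈ r.support := by
  obtain ⟨e, he, hxe⟩ :=
    (mem_support_iff_exists_mem_edges_of_not_nil hp.isCycle.not_nil).mp (hp.mem_support x)
  exact (hpqr e he).imp (mem_support_of_mem_edges · hxe) (mem_support_of_mem_edges · hxe)

theorem isHamiltonian_append_cons {q : G.Walk u v'} {r : G.Walk u' v} (h : G.Adj v' u')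
    (hnodup : (q.support ++ r.support).Nodup) (hmem : ∀ x, x ∈ q.support ++ r.support) :
    (q.append (cons h r)).IsHamiltonian := by
  have hsupp : (q.append (cons h r)).support = q.support ++ r.support := by
    simp [support_append]
  exact (IsPath.mk' (hsupp ▸ hnodup)).isHamiltonian_of_mem (hsupp ▸ hmem)

theorem IsHamiltonian.isHamiltonianCycle_cons {p : G.Walk u v} (hp : p.IsHamiltonian)
    (h : G.Adj v u) (he : s(v, u) ∉ p.edges) : (cons h p).IsHamiltonianCycle where
  toIsCycle := (cons_isCycle_iff p h).mpr ⟨hp.isPath, he⟩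
  isHamiltonian_tail := by simpa [tail_cons, IsHamiltonian] using hp

end SimpleGraph.Walk

theorem stmt_12_general (n : ℕ) (a : Fin n)
    (p : (⊤ : SimpleGraph (Fin n)).Walk a a) (hp : p.IsHamiltonianCycle)
    (u v u' v' : Fin n) (huv : u ≠ v) (hchord : s(u, v) ∉ p.edges)
    (H1 H2 : (⊤ : SimpleGraph (Fin n)).Walk u v)
    (hH1 : H1.IsPath) (hH2 : H2.IsPath)
    (hdisj : ∀ e, e ∈ H1.edges → e ∉ H2.edges)
    (hunion : ∀ e, e ∈ p.edges ↔ e ∈ H1.edges ∨ e ∈ H2.edges)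
    (h1 : s(u, u') ∈ H1.edges) (h2 : s(v, v') ∈ H2.edges) :
    ∃ (b : Fin n) (q : (⊤ : SimpleGraph (Fin n)).Walk b b),
      q.IsHamiltonianCycle ∧
      ∀ e, e ∈ q.edges ↔
        ((e ∈ p.edges ∧ e ≠ s(u, u') ∧ e ≠ s(v, v')) ∨ e = s(u, v) ∨ e = s(u', v')) := by
  have hlen :=
    hp.isCycle.isTrail.length_eq_add_of_mem_edges_iff hH1.isTrail hH2.isTrail hdisj hunion
  have hcover := hp.mem_support_or_mem_support fun e => (hunion e).mp
  have hu'v : u' ≠ v := fun h => hchord ((hunion _).mpr (Or.inl (h ▸ h1)))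
  have hnodup1 := hH1.isTrail.edges_nodup
  have hnodup2 := hH2.isTrail.edges_nodup
  obtain ⟨huu', P, rfl⟩ := hH1.exists_eq_cons_of_mem_edges h1
  obtain ⟨Q, hv'v, rfl⟩ := hH2.exists_eq_concat_of_mem_edges h2
  have hmem : ∀ x, x ∈ Q.support ++ P.support := fun x => by
    have := hcover x
    simp only [Walk.support_cons, Walk.support_concat, List.mem_cons, List.mem_append] at this ⊢
    grind [Walk.start_mem_support, Walk.end_mem_support]
  have hnodup : (Q.support ++ P.support).Nodup := by
    refine List.nodup_of_forall_mem_of_length_le_card hmem ?_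
    rw [hp.length_eq, Walk.length_cons, Walk.length_concat] at hlen
    rw [List.length_append, Walk.length_support, Walk.length_support, hlen]
    omega
  have hv'u' : (⊤ : SimpleGraph (Fin n)).Adj v' u' := by
    simpa using fun h : v' = u' =>
      List.disjoint_of_nodup_append hnodup (h ▸ Q.end_mem_support) P.start_mem_support
  simp only [Walk.edges_cons, Walk.edges_concat, List.concat_eq_append, List.nodup_cons,
    List.nodup_append, List.mem_cons, List.mem_append] at hnodup1 hnodup2 hunion hdisj
  have hedges : (Q.append (Walk.cons hv'u' P)).edges = Q.edges ++ s(v', u') :: P.edges := by simp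
  refine ⟨v, Walk.cons (by simpa using huv.symm) (Q.append (Walk.cons hv'u' P)),
    (Walk.isHamiltonian_append_cons hv'u' hnodup hmem).isHamiltonianCycle_cons _ ?_, fun e => ?_⟩
  · rw [hedges]
    grind [Sym2.eq_swap, huu'.ne, hv'v.ne]
  · rw [Walk.edges_cons, hedges]
    grind [Sym2.eq_swap, huu'.ne, hv'v.ne]

/-- Let `n ≥ 5` and let `p` be a Hamiltonian cycle of `K_n`. Let `{u,v}` be a chord of
the cycle, dividing it into two edge-disjoint `u`–`v` paths `H₁` and `H₂`; let `{u,u'}`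
be an edge of `H₁` incident to `u` and `{v,v'}` an edge of `H₂` incident to `v`. Then
the edge set `(H - {u,u'} - {v,v'}) + {u,v} + {u',v'}` is again a Hamiltonian cycle
of `K_n`. -/
theorem stmt_12 (n : ℕ) (hn : 5 ≤ n) (a : Fin n)
    (p : (⊤ : SimpleGraph (Fin n)).Walk a a) (hp : p.IsHamiltonianCycle)
    (u v u' v' : Fin n) (huv : u ≠ v) (hchord : s(u, v) ∉ p.edges)
    (H1 H2 : (⊤ : SimpleGraph (Fin n)).Walk u v)
    (hH1 : H1.IsPath) (hH2 : H2.IsPath)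
    (hdisj : ∀ e, e ∈ H1.edges → e ∉ H2.edges)
    (hunion : ∀ e, e ∈ p.edges ↔ e ∈ H1.edges ∨ e ∈ H2.edges)
    (h1 : s(u, u') ∈ H1.edges) (h2 : s(v, v') ∈ H2.edges) :
    ∃ (b : Fin n) (q : (⊤ : SimpleGraph (Fin n)).Walk b b),
      q.IsHamiltonianCycle ∧
      ∀ e, e ∈ q.edges ↔
        ((e ∈ p.edges ∧ e ≠ s(u, u') ∧ e ≠ s(v, v')) ∨ e = s(u, v) ∨ e = s(u', v')) :=
  stmt_12_general n a p hp u v u' v' huv hchord H1 H2 hH1 hH2 hdisj hunion h1 h2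
end
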